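/- arXiv:2512.08621 — 2 statements merged into one kernel-verified Lean document; each statement's English description precedes it below -/
import Mathlib

section
/- Let B be a finite set. Suppose given real numbers m(A) for every nonempty subset A ⊆ B, and real numbers J(Δ,p) for every pair (Δ,p) where Δ is a partition of some nonempty A ⊆ B and p is a partition of the same A into two-element blocks. Assume: (i) for every nonempty A ⊆ B, m(A) = Σ_Δ Σ_p J(Δ,p), where the sum ranges over all partitions Δ of A and all pairings p of A; (ii) the factorization property: for every such pair (Δ,p) on A, J(Δ,p) = ∏_{Â ∈ Δ∨p} J(Δ|_Â, p|_Â), where Δ∨p is the join (finest common coarsening) of Δ and p in the partition lattice of A and Δ|_Â, p|_Â are the restrictions to the block Â. Define κ(A) := Σ_Γ (|Γ|−1)! (−1)^{|Γ|−1} ∏_{A' ∈ Γ} m(A'), the sum over all partitions Γ of A. Then for every nonempty A ⊆ B, κ(A) = Σ J(Δ,p), where the sum ranges over all pairs (Δ,p) on A with p a pairing of A and Δ∨p = {A}. -/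
open Finset
open scoped Classical

variable {α : Type*} [DecidableEq α]

/-- `Δ` is a partition of the finite set `A`: its blocks are nonempty, pairwise
disjoint, and their union is `A`. -/
def IsPartitionOf (A : Finset α) (Δ : Finset (Finset α)) : Prop :=
  (∀ b ∈ Δ, b.Nonempty) ∧ Δ.sup id = A ∧
    ∀ b ∈ Δ, ∀ c ∈ Δ, b ≠ c → Disjoint b c

/-- The finite set of all partitions of `A`. -/
noncomputable def partitionsOf (A : Finset α) : Finset (Finset (Finset α)) :=
  A.powerset.powerset.filter (fun Δ => IsPartitionOf A Δ)

/-- The finite set of all pairings of `A`, i.e. partitions all of whose blocks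
have exactly two elements. -/
noncomputable def pairingsOf (A : Finset α) : Finset (Finset (Finset α)) :=
  (partitionsOf A).filter (fun p => ∀ b ∈ p, b.card = 2)

/-- Restriction of a partition to a subset: the nonempty intersections of the
blocks with the subset. -/
def restrictPart (Δ : Finset (Finset α)) (S : Finset α) : Finset (Finset α) :=
  (Δ.image (fun b => b ∩ S)).filter (fun b => b.Nonempty)

/-- The pair of partitions `(Δ, p)` of `A` is connected (i.e. `Δ ∨ p = {A}` in the
partition lattice): the only subsets of `A` saturated for both `Δ` and `p` are `∅`
and `A` itself. -/
def ConnectedPair (A : Finset α) (Δ p : Finset (Finset α)) : Prop :=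
  ∀ S ⊆ A, (∀ b ∈ Δ, b ⊆ S ∨ Disjoint b S) → (∀ b ∈ p, b ⊆ S ∨ Disjoint b S) →
    S = ∅ ∨ S = A

/-- The joint-cumulant expression `κ(A)` obtained from the moments `m` via the
Möbius-type formula `κ(A) = Σ_Γ (|Γ|−1)! (−1)^{|Γ|−1} ∏_{A' ∈ Γ} m A'`. -/
noncomputable def cumulantOf (m : Finset α → ℝ) (A : Finset α) : ℝ :=
  ∑ Γ ∈ partitionsOf A,
    ((Γ.card - 1).factorial : ℝ) * (-1 : ℝ) ^ (Γ.card - 1) * ∏ A' ∈ Γ, m A'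

/- ===== auxiliary development ===== -/

/-- Saturation of a subset w.r.t. a family of blocks. -/
def Sat (Δ : Finset (Finset α)) (S : Finset α) : Prop :=
  ∀ b ∈ Δ, b ⊆ S ∨ Disjoint b S

lemma mem_partitionsOf {A : Finset α} {Δ : Finset (Finset α)} :
    Δ ∈ partitionsOf A ↔ IsPartitionOf A Δ := by
  constructor
  · intro h; exact (Finset.mem_filter.1 h).2
  · intro h
    refine Finset.mem_filter.2 ⟨?_, h⟩
    simp only [Finset.mem_powerset]
    intro b hb
    simp only [Finset.mem_powerset]
    exact h.2.1 ▸ Finset.le_sup (f := id) hb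

lemma block_subset {A : Finset α} {Δ : Finset (Finset α)} (h : IsPartitionOf A Δ)
    {b : Finset α} (hb : b ∈ Δ) : b ⊆ A :=
  h.2.1 ▸ Finset.le_sup (f := id) hb

lemma exists_block {A : Finset α} {Δ : Finset (Finset α)} (h : IsPartitionOf A Δ)
    {a : α} (ha : a ∈ A) : ∃ b ∈ Δ, a ∈ b := by
  have : a ∈ Δ.sup id := h.2.1 ▸ ha
  simpa [Finset.mem_sup] using this

lemma block_unique {A : Finset α} {Δ : Finset (Finset α)} (h : IsPartitionOf A Δ)
    {b c : Finset α} (hb : b ∈ Δ) (hc : c ∈ Δ) {a : α} (hab : a ∈ b) (hac : a ∈ c) :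
    b = c := by
  by_contra hne
  exact Finset.disjoint_left.1 (h.2.2 b hb c hc hne) hab hac

lemma sat_univ {A : Finset α} {Δ : Finset (Finset α)} (h : IsPartitionOf A Δ) :
    Sat Δ A := fun b hb => Or.inl (block_subset h hb)

lemma sat_inter {Δ : Finset (Finset α)} {S T : Finset α} (hS : Sat Δ S) (hT : Sat Δ T) :
    Sat Δ (S ∩ T) := by
  intro b hb
  rcases hS b hb with h1 | h1
  · rcases hT b hb with h2 | h2
    · exact Or.inl (Finset.subset_inter h1 h2)
    · exact Or.inr (h2.mono_right Finset.inter_subset_right)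
  · exact Or.inr (h1.mono_right Finset.inter_subset_left)

lemma sat_sdiff {Δ : Finset (Finset α)} {S T : Finset α} (hS : Sat Δ S) (hT : Sat Δ T) :
    Sat Δ (S \ T) := by
  intro b hb
  rcases hT b hb with h2 | h2
  · exact Or.inr (Finset.disjoint_left.2 fun x hx hx' => (Finset.mem_sdiff.1 hx').2 (h2 hx))
  · rcases hS b hb with h1 | h1
    · exact Or.inl fun x hx => Finset.mem_sdiff.2 ⟨h1 hx, fun hxT => (Finset.disjoint_left.1 h2) hx hxT⟩
    · exact Or.inr (h1.mono_right (Finset.sdiff_subset))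

/-- On a saturated set, restriction is just the filter of blocks contained in it. -/
lemma restrict_eq_filter {Δ : Finset (Finset α)} {S : Finset α}
    (hne : ∀ b ∈ Δ, b.Nonempty) (hsat : Sat Δ S) :
    restrictPart Δ S = Δ.filter (fun b => b ⊆ S) := by
  ext x
  simp only [restrictPart, Finset.mem_filter, Finset.mem_image]
  constructor
  · rintro ⟨⟨b, hb, rfl⟩, hx⟩
    rcases hsat b hb with h | h
    · rw [Finset.inter_eq_left.2 h]; exact ⟨hb, h⟩
    · exact absurd (Finset.disjoint_iff_inter_eq_empty.1 h) (Finset.nonempty_iff_ne_empty.1 hx)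
  · rintro ⟨hb, hbS⟩
    exact ⟨⟨x, hb, Finset.inter_eq_left.2 hbS⟩, (Finset.inter_eq_left.2 hbS).symm ▸ hne x hb⟩

lemma restrict_isPartition {A : Finset α} {Δ : Finset (Finset α)} (h : IsPartitionOf A Δ)
    {S : Finset α} (hSA : S ⊆ A) (hsat : Sat Δ S) :
    IsPartitionOf S (restrictPart Δ S) := by
  rw [restrict_eq_filter h.1 hsat]
  refine ⟨fun b hb => h.1 b (Finset.mem_filter.1 hb).1, ?_, ?_⟩
  · apply Finset.Subset.antisymm
    · intro x hx
      rw [Finset.mem_sup] at hx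
      obtain ⟨b, hb, hxb⟩ := hx
      exact (Finset.mem_filter.1 hb).2 hxb
    · intro x hx
      obtain ⟨b, hb, hxb⟩ := exists_block h (hSA hx)
      have hbS : b ⊆ S := by
        rcases hsat b hb with h1 | h1
        · exact h1
        · exact absurd hx (Finset.disjoint_left.1 h1 hxb)
      rw [Finset.mem_sup]
      exact ⟨b, Finset.mem_filter.2 ⟨hb, hbS⟩, hxb⟩
  · intro b hb c hc hne
    exact h.2.2 b (Finset.mem_filter.1 hb).1 c (Finset.mem_filter.1 hc).1 hne

lemma restrict_subset_ground {Δ : Finset (Finset α)} {S : Finset α} {b : Finset α}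
    (hb : b ∈ restrictPart Δ S) : b ⊆ S := by
  simp only [restrictPart, Finset.mem_filter, Finset.mem_image] at hb
  obtain ⟨⟨c, _, rfl⟩, _⟩ := hb
  exact Finset.inter_subset_right

lemma restrict_union {Δ Δ' : Finset (Finset α)} {S : Finset α} :
    restrictPart (Δ ∪ Δ') S = restrictPart Δ S ∪ restrictPart Δ' S := by
  simp only [restrictPart, Finset.image_union, Finset.filter_union]

lemma restrict_eq_self {Δ : Finset (Finset α)} {S : Finset α}
    (hne : ∀ b ∈ Δ, b.Nonempty) (h : ∀ b ∈ Δ, b ⊆ S) : restrictPart Δ S = Δ := by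
  rw [restrict_eq_filter hne (fun b hb => Or.inl (h b hb))]
  exact Finset.filter_true_of_mem h

lemma restrict_eq_empty {Δ : Finset (Finset α)} {S : Finset α}
    (h : ∀ b ∈ Δ, Disjoint b S) : restrictPart Δ S = ∅ := by
  rw [Finset.eq_empty_iff_forall_notMem]
  intro x hx
  simp only [restrictPart, Finset.mem_filter, Finset.mem_image] at hx
  obtain ⟨⟨b, hb, rfl⟩, hne⟩ := hx
  rw [Finset.disjoint_iff_inter_eq_empty.1 (h b hb)] at hne
  exact Finset.not_nonempty_empty hne

lemma inter_inter_eq {b S T : Finset α} (h : T ⊆ S) : b ∩ S ∩ T = b ∩ T := by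
  rw [Finset.inter_assoc, Finset.inter_eq_right.2 h]

lemma restrict_restrict {Δ : Finset (Finset α)} {S T : Finset α} (h : T ⊆ S) :
    restrictPart (restrictPart Δ S) T = restrictPart Δ T := by
  ext x
  simp only [restrictPart, Finset.mem_filter, Finset.mem_image]
  constructor
  · rintro ⟨⟨b, ⟨⟨c, hc, rfl⟩, -⟩, rfl⟩, hx⟩
    exact ⟨⟨c, hc, (inter_inter_eq h).symm⟩, hx⟩
  · rintro ⟨⟨b, hb, rfl⟩, hx⟩
    refine ⟨⟨b ∩ S, ⟨⟨b, hb, rfl⟩, ?_⟩, inter_inter_eq h⟩, hx⟩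
    exact Finset.Nonempty.mono (Finset.inter_subset_inter Finset.Subset.rfl h) hx

/-- Union of partitions of disjoint sets. -/
lemma isPartition_union {S T : Finset α} {P Q : Finset (Finset α)}
    (hP : IsPartitionOf S P) (hQ : IsPartitionOf T Q) (hd : Disjoint S T) :
    IsPartitionOf (S ∪ T) (P ∪ Q) := by
  refine ⟨?_, ?_, ?_⟩
  · intro b hb
    rcases Finset.mem_union.1 hb with h | h
    · exact hP.1 b h
    · exact hQ.1 b h
  · rw [Finset.sup_union, hP.2.1, hQ.2.1]; rfl
  · intro b hb c hc hne
    rcases Finset.mem_union.1 hb with h1 | h1 <;> rcases Finset.mem_union.1 hc with h2 | h2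
    · exact hP.2.2 b h1 c h2 hne
    · exact hd.mono (block_subset hP h1) (block_subset hQ h2)
    · exact (hd.mono (block_subset hP h2) (block_subset hQ h1)).symm
    · exact hQ.2.2 b h1 c h2 hne

/- ===== components and the join partition ===== -/

/-- The block of the join `Δ ∨ p` containing `a`: the smallest doubly saturated
subset of `A` containing `a`. -/
noncomputable def comp (A : Finset α) (Δ p : Finset (Finset α)) (a : α) : Finset α :=
  A.filter (fun x => ∀ S ⊆ A, Sat Δ S → Sat p S → a ∈ S → x ∈ S)

/-- The join of two partitions of `A`. -/
noncomputable def joinPart (A : Finset α) (Δ p : Finset (Finset α)) : Finset (Finset α) :=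
  A.image (comp A Δ p)

lemma comp_subset {A : Finset α} {Δ p : Finset (Finset α)} {a : α} :
    comp A Δ p a ⊆ A := Finset.filter_subset _ _

lemma comp_min {A : Finset α} {Δ p : Finset (Finset α)} {a : α} {S : Finset α}
    (hS : S ⊆ A) (h1 : Sat Δ S) (h2 : Sat p S) (ha : a ∈ S) :
    comp A Δ p a ⊆ S := fun x hx => (Finset.mem_filter.1 hx).2 S hS h1 h2 ha

lemma mem_comp_self {A : Finset α} {Δ p : Finset (Finset α)} {a : α} (ha : a ∈ A) :
    a ∈ comp A Δ p a :=
  Finset.mem_filter.2 ⟨ha, fun _ _ _ _ h => h⟩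

lemma comp_sat_left {A : Finset α} {Δ p : Finset (Finset α)} {a : α}
    (hΔ : IsPartitionOf A Δ) : Sat Δ (comp A Δ p a) := by
  intro b hb
  by_cases hd : Disjoint b (comp A Δ p a)
  · exact Or.inr hd
  · left
    rw [Finset.not_disjoint_iff] at hd
    obtain ⟨x, hxb, hxc⟩ := hd
    intro y hy
    refine Finset.mem_filter.2 ⟨block_subset hΔ hb hy, fun S hS h1 h2 haS => ?_⟩
    have hxS : x ∈ S := (Finset.mem_filter.1 hxc).2 S hS h1 h2 haS
    rcases h1 b hb with h | h
    · exact h hy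
    · exact absurd hxS (Finset.disjoint_left.1 h hxb)

lemma comp_sat_right {A : Finset α} {Δ p : Finset (Finset α)} {a : α}
    (hp : IsPartitionOf A p) : Sat p (comp A Δ p a) := by
  intro b hb
  by_cases hd : Disjoint b (comp A Δ p a)
  · exact Or.inr hd
  · left
    rw [Finset.not_disjoint_iff] at hd
    obtain ⟨x, hxb, hxc⟩ := hd
    intro y hy
    refine Finset.mem_filter.2 ⟨block_subset hp hb hy, fun S hS h1 h2 haS => ?_⟩
    have hxS : x ∈ S := (Finset.mem_filter.1 hxc).2 S hS h1 h2 haS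
    rcases h2 b hb with h | h
    · exact h hy
    · exact absurd hxS (Finset.disjoint_left.1 h hxb)

lemma comp_symm {A : Finset α} {Δ p : Finset (Finset α)} {a x : α}
    (hΔ : IsPartitionOf A Δ) (hp : IsPartitionOf A p)
    (ha : a ∈ A) (hx : x ∈ comp A Δ p a) : a ∈ comp A Δ p x := by
  by_contra hax
  have hT : comp A Δ p a ⊆ comp A Δ p a \ comp A Δ p x :=
    comp_min (Finset.sdiff_subset.trans comp_subset)
      (sat_sdiff (comp_sat_left hΔ) (comp_sat_left hΔ))
      (sat_sdiff (comp_sat_right hp) (comp_sat_right hp))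
      (Finset.mem_sdiff.2 ⟨mem_comp_self ha, hax⟩)
  exact (Finset.mem_sdiff.1 (hT hx)).2 (mem_comp_self (comp_subset hx))

lemma comp_eq_of_mem {A : Finset α} {Δ p : Finset (Finset α)} {a x : α}
    (hΔ : IsPartitionOf A Δ) (hp : IsPartitionOf A p)
    (ha : a ∈ A) (hx : x ∈ comp A Δ p a) : comp A Δ p x = comp A Δ p a := by
  apply Finset.Subset.antisymm
  · exact comp_min comp_subset (comp_sat_left hΔ) (comp_sat_right hp) hx
  · exact comp_min comp_subset (comp_sat_left hΔ) (comp_sat_right hp)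
      (comp_symm hΔ hp ha hx)

lemma joinPart_isPartition {A : Finset α} {Δ p : Finset (Finset α)}
    (hΔ : IsPartitionOf A Δ) (hp : IsPartitionOf A p) :
    IsPartitionOf A (joinPart A Δ p) := by
  refine ⟨?_, ?_, ?_⟩
  · intro b hb
    obtain ⟨a, ha, rfl⟩ := Finset.mem_image.1 hb
    exact ⟨a, mem_comp_self ha⟩
  · apply Finset.Subset.antisymm
    · intro x hx
      rw [Finset.mem_sup] at hx
      obtain ⟨b, hb, hxb⟩ := hx
      obtain ⟨a, _, rfl⟩ := Finset.mem_image.1 hb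
      exact comp_subset hxb
    · intro x hx
      rw [Finset.mem_sup]
      exact ⟨comp A Δ p x, Finset.mem_image_of_mem _ hx, mem_comp_self hx⟩
  · intro b hb c hc hne
    obtain ⟨a, ha, rfl⟩ := Finset.mem_image.1 hb
    obtain ⟨a', ha', rfl⟩ := Finset.mem_image.1 hc
    rw [Finset.disjoint_left]
    intro x hxa hxa'
    exact hne ((comp_eq_of_mem hΔ hp ha hxa).symm.trans (comp_eq_of_mem hΔ hp ha' hxa'))

/-- Every block of `Δ` is contained in a block of the join. -/
lemma block_subset_join_left {A : Finset α} {Δ p : Finset (Finset α)}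
    (hΔ : IsPartitionOf A Δ) (hp : IsPartitionOf A p) {b : Finset α} (hb : b ∈ Δ) :
    ∃ c ∈ joinPart A Δ p, b ⊆ c := by
  obtain ⟨a, ha⟩ := hΔ.1 b hb
  have haA : a ∈ A := block_subset hΔ hb ha
  refine ⟨comp A Δ p a, Finset.mem_image_of_mem _ haA, ?_⟩
  rcases comp_sat_left (p := p) hΔ b hb with h | h
  · exact h
  · exact absurd (mem_comp_self haA) (Finset.disjoint_left.1 h ha)

lemma block_subset_join_right {A : Finset α} {Δ p : Finset (Finset α)}
    (hΔ : IsPartitionOf A Δ) (hp : IsPartitionOf A p) {b : Finset α} (hb : b ∈ p) :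
    ∃ c ∈ joinPart A Δ p, b ⊆ c := by
  obtain ⟨a, ha⟩ := hp.1 b hb
  have haA : a ∈ A := block_subset hp hb ha
  refine ⟨comp A Δ p a, Finset.mem_image_of_mem _ haA, ?_⟩
  rcases comp_sat_right (Δ := Δ) hp b hb with h | h
  · exact h
  · exact absurd (mem_comp_self haA) (Finset.disjoint_left.1 h ha)

/-- Restriction to a join block is connected. -/
lemma join_block_connected {A : Finset α} {Δ p : Finset (Finset α)}
    (hΔ : IsPartitionOf A Δ) (hp : IsPartitionOf A p) {c : Finset α}
    (hc : c ∈ joinPart A Δ p) :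
    ConnectedPair c (restrictPart Δ c) (restrictPart p c) := by
  obtain ⟨a, ha, rfl⟩ := Finset.mem_image.1 hc
  intro S hS hsΔ hsp
  rcases Finset.eq_empty_or_nonempty S with h | h
  · exact Or.inl h
  · right
    obtain ⟨x, hxS⟩ := h
    -- S is saturated for the full Δ and p
    have hsatΔ : Sat Δ S := by
      intro b hb
      rcases comp_sat_left (p := p) (a := a) hΔ b hb with h1 | h1
      · have : b ∈ restrictPart Δ (comp A Δ p a) := by
          rw [restrict_eq_filter hΔ.1 (comp_sat_left hΔ)]
          exact Finset.mem_filter.2 ⟨hb, h1⟩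
        exact hsΔ b this
      · exact Or.inr (h1.mono_right hS)
    have hsatp : Sat p S := by
      intro b hb
      rcases comp_sat_right (Δ := Δ) (a := a) hp b hb with h1 | h1
      · have : b ∈ restrictPart p (comp A Δ p a) := by
          rw [restrict_eq_filter hp.1 (comp_sat_right hp)]
          exact Finset.mem_filter.2 ⟨hb, h1⟩
        exact hsp b this
      · exact Or.inr (h1.mono_right hS)
    have hcx : comp A Δ p x ⊆ S := comp_min (hS.trans comp_subset) hsatΔ hsatp hxS
    have : comp A Δ p x = comp A Δ p a := comp_eq_of_mem hΔ hp ha (hS hxS)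
    exact Finset.Subset.antisymm hS (this ▸ hcx)

/-- Join blocks are restricted partitions / pairings. -/
lemma join_block_sat_left {A : Finset α} {Δ p : Finset (Finset α)}
    (hΔ : IsPartitionOf A Δ) (hp : IsPartitionOf A p) {c : Finset α}
    (hc : c ∈ joinPart A Δ p) : Sat Δ c := by
  obtain ⟨a, ha, rfl⟩ := Finset.mem_image.1 hc
  exact comp_sat_left hΔ

lemma join_block_sat_right {A : Finset α} {Δ p : Finset (Finset α)}
    (hΔ : IsPartitionOf A Δ) (hp : IsPartitionOf A p) {c : Finset α}
    (hc : c ∈ joinPart A Δ p) : Sat p c := by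
  obtain ⟨a, ha, rfl⟩ := Finset.mem_image.1 hc
  exact comp_sat_right hp

/-- Characterization: the join is `{A}` iff the pair is connected (for nonempty `A`). -/
lemma joinPart_eq_singleton_iff {A : Finset α} {Δ p : Finset (Finset α)}
    (hA : A.Nonempty) (hΔ : IsPartitionOf A Δ) (hp : IsPartitionOf A p) :
    joinPart A Δ p = {A} ↔ ConnectedPair A Δ p := by
  constructor
  · intro h S hS h1 h2
    rcases Finset.eq_empty_or_nonempty S with he | ⟨x, hx⟩
    · exact Or.inl he
    · right
      have hx' : comp A Δ p x ∈ joinPart A Δ p := Finset.mem_image_of_mem _ (hS hx)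
      rw [h, Finset.mem_singleton] at hx'
      exact Finset.Subset.antisymm hS (hx' ▸ comp_min hS h1 h2 hx)
  · intro hconn
    apply Finset.Subset.antisymm
    · intro c hc
      obtain ⟨a, ha, rfl⟩ := Finset.mem_image.1 hc
      rw [Finset.mem_singleton]
      rcases hconn (comp A Δ p a) comp_subset (comp_sat_left hΔ) (comp_sat_right hp) with h | h
      · exact absurd (mem_comp_self ha) (h ▸ Finset.notMem_empty a)
      · exact h
    · intro c hc
      rw [Finset.mem_singleton] at hc
      obtain ⟨a, ha⟩ := hA
      rcases hconn (comp A Δ p a) comp_subset (comp_sat_left hΔ) (comp_sat_right hp) with h | h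
      · exact absurd (mem_comp_self ha) (h ▸ Finset.notMem_empty a)
      · have h2 := Finset.mem_image_of_mem (comp A Δ p) ha
        rw [h] at h2
        rwa [hc]

/- ===== characterizing the join ===== -/

lemma mem_pairingsOf {A : Finset α} {p : Finset (Finset α)} :
    p ∈ pairingsOf A ↔ p ∈ partitionsOf A ∧ ∀ b ∈ p, b.card = 2 := Finset.mem_filter

lemma sat_subfamily {Δ Δ' : Finset (Finset α)} {S : Finset α}
    (h : ∀ b ∈ Δ', b ∈ Δ) (hS : Sat Δ S) : Sat Δ' S := fun b hb => hS b (h b hb)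

lemma mem_of_mem_restrict {Δ : Finset (Finset α)} {S b : Finset α}
    (hne : ∀ b ∈ Δ, b.Nonempty) (hsat : Sat Δ S) (hb : b ∈ restrictPart Δ S) : b ∈ Δ := by
  rw [restrict_eq_filter hne hsat] at hb
  exact (Finset.mem_filter.1 hb).1

lemma restrict_pairing {A : Finset α} {p : Finset (Finset α)} (hp : p ∈ pairingsOf A)
    {S : Finset α} (hS : S ⊆ A) (hsat : Sat p S) : restrictPart p S ∈ pairingsOf S := by
  obtain ⟨hp1, hp2⟩ := mem_pairingsOf.1 hp
  rw [mem_pairingsOf]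
  have hP := mem_partitionsOf.1 hp1
  refine ⟨mem_partitionsOf.2 (restrict_isPartition hP hS hsat), fun b hb => ?_⟩
  exact hp2 b (mem_of_mem_restrict hP.1 hsat hb)

lemma comp_eq_of_sat_connected {A : Finset α} {Δ p : Finset (Finset α)}
    (hΔ : IsPartitionOf A Δ) (hp : IsPartitionOf A p) {c : Finset α} (hcA : c ⊆ A)
    (hsΔ : Sat Δ c) (hsp : Sat p c)
    (hconn : ConnectedPair c (restrictPart Δ c) (restrictPart p c))
    {a : α} (ha : a ∈ c) : comp A Δ p a = c := by
  have hsub : comp A Δ p a ⊆ c := comp_min hcA hsΔ hsp ha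
  rcases hconn (comp A Δ p a) hsub
      (sat_subfamily (fun b hb => mem_of_mem_restrict hΔ.1 hsΔ hb) (comp_sat_left hΔ))
      (sat_subfamily (fun b hb => mem_of_mem_restrict hp.1 hsp hb) (comp_sat_right hp))
      with h | h
  · exact absurd (mem_comp_self (hcA ha)) (h ▸ Finset.notMem_empty a)
  · exact h

lemma joinPart_eq {A : Finset α} {Δ p U : Finset (Finset α)}
    (hΔ : IsPartitionOf A Δ) (hp : IsPartitionOf A p) (hU : IsPartitionOf A U)
    (hsatΔ : ∀ c ∈ U, Sat Δ c) (hsatp : ∀ c ∈ U, Sat p c)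
    (hconn : ∀ c ∈ U, ConnectedPair c (restrictPart Δ c) (restrictPart p c)) :
    joinPart A Δ p = U := by
  ext c'
  simp only [joinPart, Finset.mem_image]
  constructor
  · rintro ⟨a, ha, rfl⟩
    obtain ⟨c, hc, hac⟩ := exists_block hU ha
    rw [comp_eq_of_sat_connected hΔ hp (block_subset hU hc) (hsatΔ c hc) (hsatp c hc)
      (hconn c hc) hac]
    exact hc
  · intro hc'
    obtain ⟨a, ha⟩ := hU.1 c' hc'
    exact ⟨a, block_subset hU hc' ha,
      comp_eq_of_sat_connected hΔ hp (block_subset hU hc') (hsatΔ c' hc') (hsatp c' hc')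
        (hconn c' hc') ha⟩

/- ===== sub-join lemma: restricting a join to a union of its blocks ===== -/

lemma disjoint_sup_of_notMem {U : Finset (Finset α)} {c₀ : Finset α}
    (hU : ∀ b ∈ U, ∀ c ∈ U, b ≠ c → Disjoint b c) (hc₀ : c₀ ∈ U) {V : Finset (Finset α)}
    (hV : V ⊆ U) (hnot : c₀ ∉ V) : Disjoint c₀ (V.sup id) := by
  rw [Finset.disjoint_sup_right]
  intro c hc
  exact hU c₀ hc₀ c (hV hc) (fun h => hnot (h ▸ hc))

/- ===== fiber sums over the join ===== -/

lemma sat_of_cover {Δ U : Finset (Finset α)}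
    (hdisj : ∀ b ∈ U, ∀ c ∈ U, b ≠ c → Disjoint b c)
    (hcov : ∀ b ∈ Δ, ∃ c ∈ U, b ⊆ c) {c : Finset α} (hc : c ∈ U) : Sat Δ c := by
  intro b hb
  obtain ⟨c', hc', hbc'⟩ := hcov b hb
  by_cases h : c' = c
  · exact Or.inl (h ▸ hbc')
  · exact Or.inr ((hdisj c' hc' c hc h).mono_left hbc')

lemma sat_sup_of_cover {Δ U V : Finset (Finset α)}
    (hdisj : ∀ b ∈ U, ∀ c ∈ U, b ≠ c → Disjoint b c) (hV : V ⊆ U)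
    (hcov : ∀ b ∈ Δ, ∃ c ∈ U, b ⊆ c) : Sat Δ (V.sup id) := by
  intro b hb
  obtain ⟨c', hc', hbc'⟩ := hcov b hb
  by_cases h : c' ∈ V
  · exact Or.inl (hbc'.trans (Finset.le_sup (f := id) h))
  · exact Or.inr ((disjoint_sup_of_notMem hdisj hc' hV h).mono_left hbc')

lemma pairing_union {S T : Finset α} {q p' : Finset (Finset α)}
    (hq : q ∈ pairingsOf S) (hp' : p' ∈ pairingsOf T) (hd : Disjoint S T) :
    q ∪ p' ∈ pairingsOf (S ∪ T) := by
  obtain ⟨hq1, hq2⟩ := mem_pairingsOf.1 hq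
  obtain ⟨hp1, hp2⟩ := mem_pairingsOf.1 hp'
  refine mem_pairingsOf.2 ⟨mem_partitionsOf.2
    (isPartition_union (mem_partitionsOf.1 hq1) (mem_partitionsOf.1 hp1) hd), ?_⟩
  intro b hb
  rcases Finset.mem_union.1 hb with h | h
  · exact hq2 b h
  · exact hp2 b h

/-- The set of all pairs (partition, pairing) of `U.sup id` whose join is exactly `U`. -/
noncomputable def fiberSet (U : Finset (Finset α)) :
    Finset (Finset (Finset α) × Finset (Finset α)) :=
  ((partitionsOf (U.sup id)) ×ˢ (pairingsOf (U.sup id))).filter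
    (fun z => joinPart (U.sup id) z.1 z.2 = U)

/-- The sum of `J` over connected pairs on `c`. -/
noncomputable def connSum (J : Finset (Finset α) → Finset (Finset α) → ℝ) (c : Finset α) : ℝ :=
  ∑ Δ ∈ partitionsOf c, ∑ p ∈ pairingsOf c, if ConnectedPair c Δ p then J Δ p else 0

lemma mem_fiberSet {U : Finset (Finset α)} {z : Finset (Finset α) × Finset (Finset α)} :
    z ∈ fiberSet U ↔ (z.1 ∈ partitionsOf (U.sup id) ∧ z.2 ∈ pairingsOf (U.sup id)) ∧
      joinPart (U.sup id) z.1 z.2 = U := by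
  rw [fiberSet, Finset.mem_filter, Finset.mem_product]

lemma fiberSet_singleton_sum {c : Finset α} (hc : c.Nonempty)
    (J : Finset (Finset α) → Finset (Finset α) → ℝ) :
    ∑ z ∈ fiberSet {c}, J z.1 z.2 = connSum J c := by
  have hsup : ({c} : Finset (Finset α)).sup id = c := Finset.sup_singleton
  calc ∑ z ∈ fiberSet {c}, J z.1 z.2
      = ∑ z ∈ (partitionsOf c ×ˢ pairingsOf c),
          if joinPart c z.1 z.2 = {c} then J z.1 z.2 else 0 := by
        rw [fiberSet, hsup, Finset.sum_filter]
    _ = ∑ z ∈ (partitionsOf c ×ˢ pairingsOf c),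
          if ConnectedPair c z.1 z.2 then J z.1 z.2 else 0 := by
        refine Finset.sum_congr rfl fun z hz => ?_
        rw [Finset.mem_product] at hz
        simp only [joinPart_eq_singleton_iff hc (mem_partitionsOf.1 hz.1)
          (mem_partitionsOf.1 (mem_pairingsOf.1 hz.2).1)]
    _ = connSum J c := by rw [connSum, Finset.sum_product]

/-- Restricting a joined pair to a union of join blocks gives the corresponding sub-join. -/
lemma join_restrict_sub {A : Finset α} {Δ p U V : Finset (Finset α)}
    (hΔ : IsPartitionOf A Δ) (hp : IsPartitionOf A p) (hU : IsPartitionOf A U)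
    (hjoin : joinPart A Δ p = U) (hV : V ⊆ U) :
    joinPart (V.sup id) (restrictPart Δ (V.sup id)) (restrictPart p (V.sup id)) = V := by
  set A₀ := V.sup id with hA₀
  have hcovΔ : ∀ b ∈ Δ, ∃ c ∈ U, b ⊆ c := fun b hb => hjoin ▸ block_subset_join_left hΔ hp hb
  have hcovp : ∀ b ∈ p, ∃ c ∈ U, b ⊆ c := fun b hb => hjoin ▸ block_subset_join_right hΔ hp hb
  have hsatΔ : Sat Δ A₀ := sat_sup_of_cover hU.2.2 hV hcovΔ
  have hsatp : Sat p A₀ := sat_sup_of_cover hU.2.2 hV hcovp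
  have hA₀A : A₀ ⊆ A := hU.2.1 ▸ Finset.sup_mono hV
  have hVp : IsPartitionOf A₀ V :=
    ⟨fun b hb => hU.1 b (hV hb), rfl, fun b hb c hc h => hU.2.2 b (hV hb) c (hV hc) h⟩
  refine joinPart_eq (restrict_isPartition hΔ hA₀A hsatΔ) (restrict_isPartition hp hA₀A hsatp)
    hVp ?_ ?_ ?_
  · exact fun c hc => sat_subfamily (fun b hb => mem_of_mem_restrict hΔ.1 hsatΔ hb)
      (sat_of_cover hU.2.2 hcovΔ (hV hc))
  · exact fun c hc => sat_subfamily (fun b hb => mem_of_mem_restrict hp.1 hsatp hb)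
      (sat_of_cover hU.2.2 hcovp (hV hc))
  · intro c hc
    have hcA₀ : c ⊆ A₀ := Finset.le_sup (f := id) hc
    rw [restrict_restrict hcA₀, restrict_restrict hcA₀]
    exact join_block_connected hΔ hp (hjoin.symm ▸ hV hc)

lemma fiber_sum (B : Finset α) (J : Finset (Finset α) → Finset (Finset α) → ℝ)
    (hfact : ∀ A ⊆ B, A.Nonempty → ∀ Δ ∈ partitionsOf A, ∀ p ∈ pairingsOf A,
      ∀ U ∈ partitionsOf A,
        (∀ b ∈ Δ, ∃ c ∈ U, b ⊆ c) → (∀ b ∈ p, ∃ c ∈ U, b ⊆ c) →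
        (∀ c ∈ U, ConnectedPair c (restrictPart Δ c) (restrictPart p c)) →
        J Δ p = ∏ c ∈ U, J (restrictPart Δ c) (restrictPart p c)) :
    ∀ (U : Finset (Finset α)) (hUne : U.Nonempty), (∀ b ∈ U, b.Nonempty) →
      (∀ b ∈ U, ∀ c ∈ U, b ≠ c → Disjoint b c) → U.sup id ⊆ B →
      ∑ z ∈ fiberSet U, J z.1 z.2 = ∏ c ∈ U, connSum J c := by
  intro U hUne
  induction hUne using Finset.Nonempty.cons_induction with
  | singleton c =>
    intro hne _ _
    rw [fiberSet_singleton_sum (hne c (Finset.mem_singleton_self c)) J, Finset.prod_singleton]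
  | cons c₀ U' hc₀ hU' ih =>
    intro hne hdisj hsub
    set A := (Finset.cons c₀ U' hc₀).sup id with hA
    set A' := U'.sup id with hA'
    have hc₀mem : c₀ ∈ Finset.cons c₀ U' hc₀ := Finset.mem_cons_self c₀ U'
    have hAeq : A = c₀ ∪ A' := by rw [hA, Finset.sup_cons]; rfl
    have hc₀ne : c₀.Nonempty := hne c₀ hc₀mem
    have hne' : ∀ b ∈ U', b.Nonempty := fun b hb => hne b (Finset.mem_cons_of_mem hb)
    have hdisj' : ∀ b ∈ U', ∀ c ∈ U', b ≠ c → Disjoint b c := fun b hb c hc h =>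
      hdisj b (Finset.mem_cons_of_mem hb) c (Finset.mem_cons_of_mem hc) h
    have hA'A : A' ⊆ A := Finset.sup_mono (Finset.subset_cons hc₀)
    have hA'B : A' ⊆ B := hA'A.trans hsub
    have hc₀A : c₀ ⊆ A := Finset.le_sup (f := id) hc₀mem
    have hc₀B : c₀ ⊆ B := hc₀A.trans hsub
    have hAne : A.Nonempty := hc₀ne.mono hc₀A
    have hA'ne : A'.Nonempty := by
      obtain ⟨c, hc⟩ := hU'
      exact (hne' c hc).mono (Finset.le_sup (f := id) hc)
    have hdA : Disjoint c₀ A' :=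
      disjoint_sup_of_notMem hdisj hc₀mem (Finset.subset_cons hc₀) hc₀
    have hUp : IsPartitionOf A (Finset.cons c₀ U' hc₀) := ⟨hne, rfl, hdisj⟩
    have hU'p : IsPartitionOf A' U' := ⟨hne', rfl, hdisj'⟩
    have hUmem : Finset.cons c₀ U' hc₀ ∈ partitionsOf A := mem_partitionsOf.2 hUp
    -- the target index set
    set t := ((partitionsOf c₀ ×ˢ pairingsOf c₀).filter
        (fun y => ConnectedPair c₀ y.1 y.2)) ×ˢ fiberSet U' with ht
    have key : ∑ z ∈ fiberSet (Finset.cons c₀ U' hc₀), J z.1 z.2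
        = ∑ w ∈ t, J w.1.1 w.1.2 * J w.2.1 w.2.2 := by
      refine Finset.sum_nbij'
        (fun z => ((restrictPart z.1 c₀, restrictPart z.2 c₀),
                   (restrictPart z.1 A', restrictPart z.2 A')))
        (fun w => (w.1.1 ∪ w.2.1, w.1.2 ∪ w.2.2)) ?_ ?_ ?_ ?_ ?_
      · -- forward membership
        intro z hz
        obtain ⟨⟨hz1, hz2⟩, hjoin⟩ := mem_fiberSet.1 hz
        have hΔ := mem_partitionsOf.1 hz1
        have hp := mem_partitionsOf.1 (mem_pairingsOf.1 hz2).1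
        have hcovΔ : ∀ b ∈ z.1, ∃ c ∈ Finset.cons c₀ U' hc₀, b ⊆ c :=
          fun b hb => hjoin ▸ block_subset_join_left hΔ hp hb
        have hcovp : ∀ b ∈ z.2, ∃ c ∈ Finset.cons c₀ U' hc₀, b ⊆ c :=
          fun b hb => hjoin ▸ block_subset_join_right hΔ hp hb
        have hsatΔc₀ : Sat z.1 c₀ := sat_of_cover hdisj hcovΔ hc₀mem
        have hsatpc₀ : Sat z.2 c₀ := sat_of_cover hdisj hcovp hc₀mem
        have hsatΔA' : Sat z.1 A' := sat_sup_of_cover hdisj (Finset.subset_cons hc₀) hcovΔ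
        have hsatpA' : Sat z.2 A' := sat_sup_of_cover hdisj (Finset.subset_cons hc₀) hcovp
        rw [ht, Finset.mem_product]
        constructor
        · rw [Finset.mem_filter, Finset.mem_product]
          exact ⟨⟨mem_partitionsOf.2 (restrict_isPartition hΔ hc₀A hsatΔc₀),
            restrict_pairing hz2 hc₀A hsatpc₀⟩,
            join_block_connected hΔ hp (hjoin.symm ▸ hc₀mem)⟩
        · rw [mem_fiberSet]
          exact ⟨⟨mem_partitionsOf.2 (restrict_isPartition hΔ hA'A hsatΔA'),
            restrict_pairing hz2 hA'A hsatpA'⟩,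
            join_restrict_sub hΔ hp hUp hjoin (Finset.subset_cons hc₀)⟩
      · -- backward membership
        intro w hw
        rw [ht, Finset.mem_product] at hw
        obtain ⟨hw1, hw2⟩ := hw
        rw [Finset.mem_filter, Finset.mem_product] at hw1
        obtain ⟨⟨hδ, hq⟩, hconn⟩ := hw1
        obtain ⟨⟨hΔ', hp'⟩, hjoin'⟩ := mem_fiberSet.1 hw2
        have hδp := mem_partitionsOf.1 hδ
        have hqp := mem_partitionsOf.1 (mem_pairingsOf.1 hq).1
        have hΔ'p := mem_partitionsOf.1 hΔ'
        have hp'p := mem_partitionsOf.1 (mem_pairingsOf.1 hp').1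
        have hglueΔ : IsPartitionOf A (w.1.1 ∪ w.2.1) := by
          rw [hAeq]; exact isPartition_union hδp hΔ'p hdA
        have hgluep : IsPartitionOf A (w.1.2 ∪ w.2.2) := by
          rw [hAeq]; exact isPartition_union hqp hp'p hdA
        rw [mem_fiberSet]
        refine ⟨⟨mem_partitionsOf.2 hglueΔ, ?_⟩, ?_⟩
        · show w.1.2 ∪ w.2.2 ∈ pairingsOf A
          rw [hAeq]
          exact pairing_union hq hp' hdA
        · -- join of the glued pair is cons c₀ U'
          have hcovΔ' : ∀ b ∈ w.2.1, ∃ c ∈ U', b ⊆ c :=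
            fun b hb => hjoin' ▸ block_subset_join_left hΔ'p hp'p hb
          have hcovp' : ∀ b ∈ w.2.2, ∃ c ∈ U', b ⊆ c :=
            fun b hb => hjoin' ▸ block_subset_join_right hΔ'p hp'p hb
          have hcovΔ : ∀ b ∈ w.1.1 ∪ w.2.1, ∃ c ∈ Finset.cons c₀ U' hc₀, b ⊆ c := by
            intro b hb
            rcases Finset.mem_union.1 hb with h | h
            · exact ⟨c₀, hc₀mem, block_subset hδp h⟩
            · obtain ⟨c, hc, hbc⟩ := hcovΔ' b h
              exact ⟨c, Finset.mem_cons_of_mem hc, hbc⟩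
          have hcovp : ∀ b ∈ w.1.2 ∪ w.2.2, ∃ c ∈ Finset.cons c₀ U' hc₀, b ⊆ c := by
            intro b hb
            rcases Finset.mem_union.1 hb with h | h
            · exact ⟨c₀, hc₀mem, block_subset hqp h⟩
            · obtain ⟨c, hc, hbc⟩ := hcovp' b h
              exact ⟨c, Finset.mem_cons_of_mem hc, hbc⟩
          have hrΔc₀ : restrictPart (w.1.1 ∪ w.2.1) c₀ = w.1.1 := by
            rw [restrict_union, restrict_eq_self hδp.1 (fun b hb => block_subset hδp hb),
              restrict_eq_empty (fun b hb => hdA.symm.mono_left (block_subset hΔ'p hb)),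
              Finset.union_empty]
          have hrpc₀ : restrictPart (w.1.2 ∪ w.2.2) c₀ = w.1.2 := by
            rw [restrict_union, restrict_eq_self hqp.1 (fun b hb => block_subset hqp hb),
              restrict_eq_empty (fun b hb => hdA.symm.mono_left (block_subset hp'p hb)),
              Finset.union_empty]
          have hrΔc : ∀ c ∈ U', restrictPart (w.1.1 ∪ w.2.1) c = restrictPart w.2.1 c := by
            intro c hc
            rw [restrict_union, restrict_eq_empty (fun b hb => ?_), Finset.empty_union]
            exact ((disjoint_sup_of_notMem hdisj hc₀mem (Finset.subset_cons hc₀)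
              hc₀).mono_right (Finset.le_sup (f := id) hc)).mono_left (block_subset hδp hb)
          have hrpc : ∀ c ∈ U', restrictPart (w.1.2 ∪ w.2.2) c = restrictPart w.2.2 c := by
            intro c hc
            rw [restrict_union, restrict_eq_empty (fun b hb => ?_), Finset.empty_union]
            exact ((disjoint_sup_of_notMem hdisj hc₀mem (Finset.subset_cons hc₀)
              hc₀).mono_right (Finset.le_sup (f := id) hc)).mono_left (block_subset hqp hb)
          refine joinPart_eq hglueΔ hgluep hUp (fun c hc => sat_of_cover hdisj hcovΔ hc)
            (fun c hc => sat_of_cover hdisj hcovp hc) ?_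
          intro c hc
          rcases Finset.mem_cons.1 hc with rfl | hc'
          · rw [hrΔc₀, hrpc₀]; exact hconn
          · rw [hrΔc c hc', hrpc c hc']
            exact join_block_connected hΔ'p hp'p (hjoin'.symm ▸ hc')
      · -- left inverse
        intro z hz
        obtain ⟨⟨hz1, hz2⟩, hjoin⟩ := mem_fiberSet.1 hz
        have hΔ := mem_partitionsOf.1 hz1
        have hp := mem_partitionsOf.1 (mem_pairingsOf.1 hz2).1
        have hcovΔ : ∀ b ∈ z.1, ∃ c ∈ Finset.cons c₀ U' hc₀, b ⊆ c :=
          fun b hb => hjoin ▸ block_subset_join_left hΔ hp hb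
        have hcovp : ∀ b ∈ z.2, ∃ c ∈ Finset.cons c₀ U' hc₀, b ⊆ c :=
          fun b hb => hjoin ▸ block_subset_join_right hΔ hp hb
        have hΔu : restrictPart z.1 c₀ ∪ restrictPart z.1 A' = z.1 := by
          rw [restrict_eq_filter hΔ.1 (sat_of_cover hdisj hcovΔ hc₀mem),
            restrict_eq_filter hΔ.1 (sat_sup_of_cover hdisj (Finset.subset_cons hc₀) hcovΔ),
            ← Finset.filter_or]
          refine Finset.filter_true_of_mem ?_
          intro b hb
          obtain ⟨c, hc, hbc⟩ := hcovΔ b hb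
          rcases Finset.mem_cons.1 hc with rfl | hc'
          · exact Or.inl hbc
          · exact Or.inr (hbc.trans (Finset.le_sup (f := id) hc'))
        have hpu : restrictPart z.2 c₀ ∪ restrictPart z.2 A' = z.2 := by
          rw [restrict_eq_filter hp.1 (sat_of_cover hdisj hcovp hc₀mem),
            restrict_eq_filter hp.1 (sat_sup_of_cover hdisj (Finset.subset_cons hc₀) hcovp),
            ← Finset.filter_or]
          refine Finset.filter_true_of_mem ?_
          intro b hb
          obtain ⟨c, hc, hbc⟩ := hcovp b hb
          rcases Finset.mem_cons.1 hc with rfl | hc'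
          · exact Or.inl hbc
          · exact Or.inr (hbc.trans (Finset.le_sup (f := id) hc'))
        exact Prod.ext hΔu hpu
      · -- right inverse
        intro w hw
        rw [ht, Finset.mem_product] at hw
        obtain ⟨hw1, hw2⟩ := hw
        rw [Finset.mem_filter, Finset.mem_product] at hw1
        obtain ⟨⟨hδ, hq⟩, _⟩ := hw1
        obtain ⟨⟨hΔ', hp'⟩, _⟩ := mem_fiberSet.1 hw2
        have hδp := mem_partitionsOf.1 hδ
        have hqp := mem_partitionsOf.1 (mem_pairingsOf.1 hq).1
        have hΔ'p := mem_partitionsOf.1 hΔ'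
        have hp'p := mem_partitionsOf.1 (mem_pairingsOf.1 hp').1
        have e1 : restrictPart (w.1.1 ∪ w.2.1) c₀ = w.1.1 := by
          rw [restrict_union, restrict_eq_self hδp.1 (fun b hb => block_subset hδp hb),
            restrict_eq_empty (fun b hb => hdA.symm.mono_left (block_subset hΔ'p hb)),
            Finset.union_empty]
        have e2 : restrictPart (w.1.2 ∪ w.2.2) c₀ = w.1.2 := by
          rw [restrict_union, restrict_eq_self hqp.1 (fun b hb => block_subset hqp hb),
            restrict_eq_empty (fun b hb => hdA.symm.mono_left (block_subset hp'p hb)),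
            Finset.union_empty]
        have e3 : restrictPart (w.1.1 ∪ w.2.1) A' = w.2.1 := by
          rw [restrict_union, restrict_eq_self hΔ'p.1 (fun b hb => block_subset hΔ'p hb),
            restrict_eq_empty (fun b hb => hdA.mono_left (block_subset hδp hb)),
            Finset.empty_union]
        have e4 : restrictPart (w.1.2 ∪ w.2.2) A' = w.2.2 := by
          rw [restrict_union, restrict_eq_self hp'p.1 (fun b hb => block_subset hp'p hb),
            restrict_eq_empty (fun b hb => hdA.mono_left (block_subset hqp hb)),
            Finset.empty_union]
        exact Prod.ext (Prod.ext e1 e2) (Prod.ext e3 e4)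
      · -- values match
        intro z hz
        obtain ⟨⟨hz1, hz2⟩, hjoin⟩ := mem_fiberSet.1 hz
        have hΔ := mem_partitionsOf.1 hz1
        have hp := mem_partitionsOf.1 (mem_pairingsOf.1 hz2).1
        have hcovΔ : ∀ b ∈ z.1, ∃ c ∈ Finset.cons c₀ U' hc₀, b ⊆ c :=
          fun b hb => hjoin ▸ block_subset_join_left hΔ hp hb
        have hcovp : ∀ b ∈ z.2, ∃ c ∈ Finset.cons c₀ U' hc₀, b ⊆ c :=
          fun b hb => hjoin ▸ block_subset_join_right hΔ hp hb
        have hconn : ∀ c ∈ Finset.cons c₀ U' hc₀,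
            ConnectedPair c (restrictPart z.1 c) (restrictPart z.2 c) :=
          fun c hc => join_block_connected hΔ hp (hjoin.symm ▸ hc)
        have step1 : J z.1 z.2 = J (restrictPart z.1 c₀) (restrictPart z.2 c₀) *
            ∏ c ∈ U', J (restrictPart z.1 c) (restrictPart z.2 c) := by
          rw [hfact A hsub hAne z.1 hz1 z.2 hz2 _ hUmem hcovΔ hcovp hconn, Finset.prod_cons]
        have hsatΔA' : Sat z.1 A' := sat_sup_of_cover hdisj (Finset.subset_cons hc₀) hcovΔ
        have hsatpA' : Sat z.2 A' := sat_sup_of_cover hdisj (Finset.subset_cons hc₀) hcovp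
        have hrA'Δ : restrictPart z.1 A' ∈ partitionsOf A' :=
          mem_partitionsOf.2 (restrict_isPartition hΔ hA'A hsatΔA')
        have hrA'p : restrictPart z.2 A' ∈ pairingsOf A' := restrict_pairing hz2 hA'A hsatpA'
        have hjoin' := join_restrict_sub hΔ hp hUp hjoin (Finset.subset_cons hc₀)
        have hΔ'p := mem_partitionsOf.1 hrA'Δ
        have hp'p := mem_partitionsOf.1 (mem_pairingsOf.1 hrA'p).1
        have step2 : J (restrictPart z.1 A') (restrictPart z.2 A') =
            ∏ c ∈ U', J (restrictPart z.1 c) (restrictPart z.2 c) := by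
          rw [hfact A' hA'B hA'ne _ hrA'Δ _ hrA'p U' (mem_partitionsOf.2 hU'p)
            (fun b hb => hjoin' ▸ block_subset_join_left hΔ'p hp'p hb)
            (fun b hb => hjoin' ▸ block_subset_join_right hΔ'p hp'p hb)
            (fun c hc => by
              have hcA'2 : c ⊆ A' := Finset.le_sup (f := id) hc
              rw [restrict_restrict hcA'2, restrict_restrict hcA'2]
              exact hconn c (Finset.mem_cons_of_mem hc))]
          refine Finset.prod_congr rfl fun c hc => ?_
          have hcA'2 : c ⊆ A' := Finset.le_sup (f := id) hc
          rw [restrict_restrict hcA'2, restrict_restrict hcA'2]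
        rw [step1, step2]
    have interchange : ∑ w ∈ t, J w.1.1 w.1.2 * J w.2.1 w.2.2
        = (∑ y ∈ (partitionsOf c₀ ×ˢ pairingsOf c₀).filter
            (fun y => ConnectedPair c₀ y.1 y.2), J y.1 y.2) * ∑ z ∈ fiberSet U', J z.1 z.2 := by
      rw [ht, Finset.sum_product, Finset.sum_mul_sum]
    have hconn0 : connSum J c₀ = ∑ y ∈ (partitionsOf c₀ ×ˢ pairingsOf c₀).filter
        (fun y => ConnectedPair c₀ y.1 y.2), J y.1 y.2 := by
      simp only [connSum, Finset.sum_filter, Finset.sum_product]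
    rw [key, interchange, Finset.prod_cons, ← ih hne' hdisj' hA'B, hconn0]

/- ===== refinements ===== -/

/-- `V` refines `Γ`: every block of `V` is contained in a block of `Γ`. -/
def Refines (V Γ : Finset (Finset α)) : Prop := ∀ b ∈ V, ∃ c ∈ Γ, b ⊆ c

lemma disjoint_blocks {S T : Finset α} {P Q : Finset (Finset α)}
    (hP : IsPartitionOf S P) (hQ : IsPartitionOf T Q) (hd : Disjoint S T) :
    Disjoint P Q := by
  rw [Finset.disjoint_left]
  intro b hbP hbQ
  obtain ⟨x, hx⟩ := hP.1 b hbP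
  exact Finset.disjoint_left.1 hd (block_subset hP hbP hx) (block_subset hQ hbQ hx)

lemma restrict_split {Δ : Finset (Finset α)} {S T : Finset α}
    (hne : ∀ b ∈ Δ, b.Nonempty) (hsatS : Sat Δ S) (hsatT : Sat Δ T)
    (hcov : ∀ b ∈ Δ, b ⊆ S ∨ b ⊆ T) :
    restrictPart Δ S ∪ restrictPart Δ T = Δ := by
  rw [restrict_eq_filter hne hsatS, restrict_eq_filter hne hsatT, ← Finset.filter_or]
  exact Finset.filter_true_of_mem hcov

lemma refine_sum (K : Finset α → ℝ) :
    ∀ (Γ : Finset (Finset α)) (hΓne : Γ.Nonempty), (∀ b ∈ Γ, b.Nonempty) →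
      (∀ b ∈ Γ, ∀ c ∈ Γ, b ≠ c → Disjoint b c) →
      ∏ c ∈ Γ, (∑ V ∈ partitionsOf c, ∏ d ∈ V, K d)
        = ∑ V ∈ (partitionsOf (Γ.sup id)).filter (fun V => Refines V Γ), ∏ d ∈ V, K d := by
  intro Γ hΓne
  induction hΓne using Finset.Nonempty.cons_induction with
  | singleton c =>
    intro hne _
    rw [Finset.prod_singleton, Finset.sup_singleton]
    congr 1
    refine (Finset.filter_true_of_mem ?_).symm
    intro V hV b hb
    exact ⟨c, Finset.mem_singleton_self c, block_subset (mem_partitionsOf.1 hV) hb⟩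
  | cons c₀ Γ' hc₀ hΓ' ih =>
    intro hne hdisj
    set A := (Finset.cons c₀ Γ' hc₀).sup id with hA
    set A' := Γ'.sup id with hA'
    have hc₀mem : c₀ ∈ Finset.cons c₀ Γ' hc₀ := Finset.mem_cons_self c₀ Γ'
    have hAeq : A = c₀ ∪ A' := by rw [hA, Finset.sup_cons]; rfl
    have hne' : ∀ b ∈ Γ', b.Nonempty := fun b hb => hne b (Finset.mem_cons_of_mem hb)
    have hdisj' : ∀ b ∈ Γ', ∀ c ∈ Γ', b ≠ c → Disjoint b c := fun b hb c hc h =>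
      hdisj b (Finset.mem_cons_of_mem hb) c (Finset.mem_cons_of_mem hc) h
    have hc₀A : c₀ ⊆ A := Finset.le_sup (f := id) hc₀mem
    have hdA : Disjoint c₀ A' :=
      disjoint_sup_of_notMem hdisj hc₀mem (Finset.subset_cons hc₀) hc₀
    calc ∏ c ∈ Finset.cons c₀ Γ' hc₀, (∑ V ∈ partitionsOf c, ∏ d ∈ V, K d)
        = (∑ V ∈ partitionsOf c₀, ∏ d ∈ V, K d) *
            ∑ V ∈ (partitionsOf A').filter (fun V => Refines V Γ'), ∏ d ∈ V, K d := by
          rw [Finset.prod_cons, ih hne' hdisj']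
      _ = ∑ w ∈ partitionsOf c₀ ×ˢ ((partitionsOf A').filter (fun V => Refines V Γ')),
            (∏ d ∈ w.1, K d) * ∏ d ∈ w.2, K d := by
          rw [Finset.sum_mul_sum, ← Finset.sum_product']
      _ = ∑ V ∈ (partitionsOf A).filter (fun V => Refines V (Finset.cons c₀ Γ' hc₀)),
            ∏ d ∈ V, K d := ?_
    refine Finset.sum_nbij'
      (fun w => w.1 ∪ w.2)
      (fun V => (restrictPart V c₀, restrictPart V A'))
      ?_ ?_ ?_ ?_ ?_
    · -- forward membership (glue)
      intro w hw
      rw [Finset.mem_product, Finset.mem_filter] at hw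
      obtain ⟨h1, h2, h3⟩ := hw
      have hP := mem_partitionsOf.1 h1
      have hQ := mem_partitionsOf.1 h2
      rw [Finset.mem_filter]
      constructor
      · refine mem_partitionsOf.2 ?_
        show IsPartitionOf A (w.1 ∪ w.2)
        rw [hAeq]
        exact isPartition_union hP hQ hdA
      · intro b hb
        rcases Finset.mem_union.1 hb with h | h
        · exact ⟨c₀, hc₀mem, block_subset hP h⟩
        · obtain ⟨c, hc, hbc⟩ := h3 b h
          exact ⟨c, Finset.mem_cons_of_mem hc, hbc⟩
    · -- backward membership (split)
      intro V hV
      rw [Finset.mem_filter] at hV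
      obtain ⟨hV1, hV2⟩ := hV
      have hVp := mem_partitionsOf.1 hV1
      have hsatc₀ : Sat V c₀ := sat_of_cover hdisj hV2 hc₀mem
      have hsatA' : Sat V A' := sat_sup_of_cover hdisj (Finset.subset_cons hc₀) hV2
      rw [Finset.mem_product, Finset.mem_filter]
      refine ⟨mem_partitionsOf.2 (restrict_isPartition hVp hc₀A hsatc₀),
        mem_partitionsOf.2 (restrict_isPartition hVp
          (hAeq ▸ Finset.subset_union_right) hsatA'), ?_⟩
      intro b hb
      have hbV : b ∈ V := mem_of_mem_restrict hVp.1 hsatA' hb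
      have hbA' : b ⊆ A' := restrict_subset_ground hb
      obtain ⟨c, hc, hbc⟩ := hV2 b hbV
      rcases Finset.mem_cons.1 hc with rfl | hc'
      · obtain ⟨x, hx⟩ := hVp.1 b hbV
        exact absurd (hbA' hx) (Finset.disjoint_left.1 hdA (hbc hx))
      · exact ⟨c, hc', hbc⟩
    · -- left inverse (split ∘ glue = id)
      intro w hw
      rw [Finset.mem_product, Finset.mem_filter] at hw
      obtain ⟨h1, h2, _⟩ := hw
      have hP := mem_partitionsOf.1 h1
      have hQ := mem_partitionsOf.1 h2
      have e1 : restrictPart (w.1 ∪ w.2) c₀ = w.1 := by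
        rw [restrict_union, restrict_eq_self hP.1 (fun b hb => block_subset hP hb),
          restrict_eq_empty (fun b hb => hdA.symm.mono_left (block_subset hQ hb)),
          Finset.union_empty]
      have e2 : restrictPart (w.1 ∪ w.2) A' = w.2 := by
        rw [restrict_union, restrict_eq_self hQ.1 (fun b hb => block_subset hQ hb),
          restrict_eq_empty (fun b hb => hdA.mono_left (block_subset hP hb)),
          Finset.empty_union]
      exact Prod.ext e1 e2
    · -- right inverse (glue ∘ split = id)
      intro V hV
      rw [Finset.mem_filter] at hV
      obtain ⟨hV1, hV2⟩ := hV
      have hVp := mem_partitionsOf.1 hV1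
      have hsatc₀ : Sat V c₀ := sat_of_cover hdisj hV2 hc₀mem
      have hsatA' : Sat V A' := sat_sup_of_cover hdisj (Finset.subset_cons hc₀) hV2
      refine restrict_split hVp.1 hsatc₀ hsatA' ?_
      intro b hb
      obtain ⟨c, hc, hbc⟩ := hV2 b hb
      rcases Finset.mem_cons.1 hc with rfl | hc'
      · exact Or.inl hbc
      · exact Or.inr (hbc.trans (Finset.le_sup (f := id) hc'))
    · -- values
      intro w hw
      rw [Finset.mem_product, Finset.mem_filter] at hw
      obtain ⟨h1, h2, _⟩ := hw
      have hP := mem_partitionsOf.1 h1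
      have hQ := mem_partitionsOf.1 h2
      exact (Finset.prod_union (disjoint_blocks hP hQ hdA)).symm

/- ===== the Möbius-type identity ===== -/

lemma restrict_isPartition' {A : Finset α} {Δ : Finset (Finset α)} (h : IsPartitionOf A Δ)
    {S : Finset α} (hS : S ⊆ A) : IsPartitionOf S (restrictPart Δ S) := by
  refine ⟨fun b hb => (Finset.mem_filter.1 hb).2, ?_, ?_⟩
  · apply Finset.Subset.antisymm
    · intro x hx
      rw [Finset.mem_sup] at hx
      obtain ⟨b, hb, hxb⟩ := hx
      exact restrict_subset_ground hb hxb
    · intro x hx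
      obtain ⟨b, hb, hxb⟩ := exists_block h (hS hx)
      rw [Finset.mem_sup]
      exact ⟨b ∩ S, Finset.mem_filter.2 ⟨Finset.mem_image_of_mem _ hb,
        ⟨x, Finset.mem_inter.2 ⟨hxb, hx⟩⟩⟩, Finset.mem_inter.2 ⟨hxb, hx⟩⟩
  · intro b hb c hc hne
    obtain ⟨hb1, -⟩ := Finset.mem_filter.1 hb
    obtain ⟨hc1, -⟩ := Finset.mem_filter.1 hc
    obtain ⟨b', hb', rfl⟩ := Finset.mem_image.1 hb1
    obtain ⟨c', hc', rfl⟩ := Finset.mem_image.1 hc1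
    have hbc : b' ≠ c' := fun h => hne (h ▸ rfl)
    exact (h.2.2 b' hb' c' hc' hbc).mono Finset.inter_subset_left Finset.inter_subset_left

lemma partitionsOf_singleton {a : α} :
    partitionsOf ({a} : Finset α) = {({({a} : Finset α)} : Finset (Finset α))} := by
  ext Γ
  simp only [Finset.mem_singleton]
  rw [mem_partitionsOf]
  constructor
  · intro h
    have hblocks : ∀ b ∈ Γ, b = {a} := by
      intro b hb
      have h1 : b ⊆ {a} := block_subset h hb
      obtain ⟨x, hx⟩ := h.1 b hb
      have h2 := Finset.mem_singleton.1 (h1 hx)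
      subst h2
      exact Finset.Subset.antisymm h1 (Finset.singleton_subset_iff.2 hx)
    have hΓne : Γ.Nonempty := by
      rcases Finset.eq_empty_or_nonempty Γ with rfl | h2
      · exfalso
        have := h.2.1
        rw [Finset.sup_empty] at this
        exact (Finset.singleton_ne_empty a) this.symm
      · exact h2
    obtain ⟨b, hb⟩ := hΓne
    exact Finset.eq_singleton_iff_unique_mem.2 ⟨(hblocks b hb) ▸ hb, hblocks⟩
  · rintro rfl
    refine ⟨?_, ?_, ?_⟩
    · intro b hb
      rw [Finset.mem_singleton] at hb
      subst hb
      exact Finset.singleton_nonempty a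
    · simp
    · intro b hb c hc hne
      rw [Finset.mem_singleton] at hb hc
      exact absurd (hb.trans hc.symm) hne

lemma fiber_insert {a : α} {S : Finset α} (ha : a ∉ S) {W : Finset (Finset α)}
    (hW : W ∈ partitionsOf S) :
    (partitionsOf (Finset.cons a S ha)).filter (fun Γ => restrictPart Γ S = W)
      = insert (insert {a} W) (W.image (fun w => insert (insert a w) (W.erase w))) := by
  have hWp := mem_partitionsOf.1 hW
  have hT : (Finset.cons a S ha : Finset α) = insert a S := Finset.cons_eq_insert a S ha
  have hblocksS : ∀ w' ∈ W, w' ⊆ S := fun w' hw' => block_subset hWp hw'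
  have hrWS : restrictPart W S = W := restrict_eq_self hWp.1 hblocksS
  have hrsing : restrictPart ({({a} : Finset α)} : Finset (Finset α)) S = ∅ := by
    refine restrict_eq_empty ?_
    intro b hb
    rw [Finset.mem_singleton] at hb
    subst hb
    exact Finset.disjoint_singleton_left.2 ha
  ext Γ
  simp only [Finset.mem_filter, Finset.mem_insert, Finset.mem_image]
  constructor
  · rintro ⟨hΓ, hres⟩
    have hΓp := mem_partitionsOf.1 hΓ
    obtain ⟨b₀, hb₀, hab₀⟩ := exists_block hΓp (by rw [hT]; exact Finset.mem_insert_self a S)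
    have hother : ∀ b ∈ Γ, b ≠ b₀ → b ⊆ S := by
      intro b hb hne x hx
      have hbT : b ⊆ insert a S := hT ▸ block_subset hΓp hb
      rcases Finset.mem_insert.1 (hbT hx) with rfl | h
      · exact absurd (block_unique hΓp hb hb₀ hx hab₀) hne
      · exact h
    have herase : restrictPart (Γ.erase b₀) S = Γ.erase b₀ :=
      restrict_eq_self (fun b hb => hΓp.1 b (Finset.mem_of_mem_erase hb))
        (fun b hb => hother b (Finset.mem_of_mem_erase hb) (Finset.ne_of_mem_erase hb))
    have hsplitΓ : Γ = insert b₀ (Γ.erase b₀) := (Finset.insert_erase hb₀).symm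
    have hres2 : restrictPart {b₀} S ∪ Γ.erase b₀ = W := by
      calc restrictPart {b₀} S ∪ Γ.erase b₀
          = restrictPart {b₀} S ∪ restrictPart (Γ.erase b₀) S := by rw [herase]
        _ = restrictPart ({b₀} ∪ Γ.erase b₀) S := restrict_union.symm
        _ = restrictPart Γ S := by rw [← Finset.insert_eq, ← hsplitΓ]
        _ = W := hres
    by_cases hb₀a : b₀ = {a}
    · left
      have h0 : restrictPart {b₀} S = ∅ := by rw [hb₀a]; exact hrsing
      rw [h0, Finset.empty_union] at hres2
      rw [hsplitΓ, hres2, hb₀a]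
    · right
      have hwS : b₀ ∩ S ⊆ S := Finset.inter_subset_right
      have hb₀eq : b₀ = insert a (b₀ ∩ S) := by
        ext x
        rw [Finset.mem_insert, Finset.mem_inter]
        constructor
        · intro hx
          have hbT : b₀ ⊆ insert a S := hT ▸ block_subset hΓp hb₀
          rcases Finset.mem_insert.1 (hbT hx) with rfl | h
          · exact Or.inl rfl
          · exact Or.inr ⟨hx, h⟩
        · rintro (rfl | ⟨h1, _⟩)
          · exact hab₀
          · exact h1
      have hwne : (b₀ ∩ S).Nonempty := by
        rcases Finset.eq_empty_or_nonempty (b₀ ∩ S) with he | hne2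
        · exact absurd (by rw [hb₀eq, he]; rfl) hb₀a
        · exact hne2
      have hrb₀ : restrictPart {b₀} S = {b₀ ∩ S} := by
        rw [restrictPart, Finset.image_singleton, Finset.filter_singleton, if_pos hwne]
      rw [hrb₀, ← Finset.insert_eq] at hres2
      have hwW : b₀ ∩ S ∈ W := hres2 ▸ Finset.mem_insert_self _ _
      refine ⟨b₀ ∩ S, hwW, ?_⟩
      have hwnotin : b₀ ∩ S ∉ Γ.erase b₀ := by
        intro hmem
        have hdisj : Disjoint (b₀ ∩ S) b₀ := by
          refine hΓp.2.2 _ (Finset.mem_of_mem_erase hmem) b₀ hb₀ (Finset.ne_of_mem_erase hmem)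
        obtain ⟨x, hx⟩ := hwne
        exact Finset.disjoint_left.1 hdisj hx (Finset.mem_inter.1 hx).1
      have hWe : W.erase (b₀ ∩ S) = Γ.erase b₀ := by
        rw [← hres2, Finset.erase_insert hwnotin]
      rw [hWe, ← hb₀eq, ← hsplitΓ]
  · intro h
    have hsupW : W.sup id = S := hWp.2.1
    rcases h with rfl | ⟨w, hwW, rfl⟩
    · have haW : ({a} : Finset α) ∉ W :=
        fun h => ha (hblocksS _ h (Finset.mem_singleton_self a))
      constructor
      · refine mem_partitionsOf.2 ⟨?_, ?_, ?_⟩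
        · intro b hb
          rcases Finset.mem_insert.1 hb with rfl | h
          · exact Finset.singleton_nonempty a
          · exact hWp.1 b h
        · rw [Finset.sup_insert, hsupW, hT, Finset.insert_eq]
          rfl
        · intro b hb c hc hne
          rcases Finset.mem_insert.1 hb with rfl | h1 <;> rcases Finset.mem_insert.1 hc with rfl | h2
          · exact absurd rfl hne
          · exact Finset.disjoint_singleton_left.2 fun h => ha (hblocksS c h2 h)
          · exact (Finset.disjoint_singleton_left.2 fun h => ha (hblocksS b h1 h)).symm
          · exact hWp.2.2 b h1 c h2 hne
      · rw [Finset.insert_eq, restrict_union, hrsing, hrWS, Finset.empty_union]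
    · have hwS : w ⊆ S := hblocksS w hwW
      have hwne : w.Nonempty := hWp.1 w hwW
      have hanotw : a ∉ w := fun h => ha (hwS h)
      have heraseS : ∀ b ∈ W.erase w, b ⊆ S := fun b hb => hblocksS b (Finset.mem_of_mem_erase hb)
      have hiw : insert a w ∉ W.erase w :=
        fun h => ha (heraseS _ h (Finset.mem_insert_self a w))
      constructor
      · refine mem_partitionsOf.2 ⟨?_, ?_, ?_⟩
        · intro b hb
          rcases Finset.mem_insert.1 hb with rfl | h
          · exact Finset.insert_nonempty a w
          · exact hWp.1 b (Finset.mem_of_mem_erase h)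
        · apply Finset.Subset.antisymm
          · intro x hx
            rw [Finset.mem_sup] at hx
            obtain ⟨b, hb, hxb⟩ := hx
            rw [hT]
            rcases Finset.mem_insert.1 hb with rfl | h
            · rcases Finset.mem_insert.1 hxb with rfl | h2
              · exact Finset.mem_insert_self x S
              · exact Finset.mem_insert_of_mem (hwS h2)
            · exact Finset.mem_insert_of_mem (heraseS b h hxb)
          · intro x hx
            rw [hT] at hx
            rw [Finset.mem_sup]
            rcases Finset.mem_insert.1 hx with rfl | hxS
            · exact ⟨insert x w, Finset.mem_insert_self _ _, Finset.mem_insert_self x w⟩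
            · obtain ⟨b, hb, hxb⟩ := exists_block hWp hxS
              by_cases hbw : b = w
              · exact ⟨insert a w, Finset.mem_insert_self _ _,
                  Finset.mem_insert_of_mem (hbw ▸ hxb)⟩
              · exact ⟨b, Finset.mem_insert_of_mem (Finset.mem_erase.2 ⟨hbw, hb⟩), hxb⟩
        · intro b hb c hc hne
          rcases Finset.mem_insert.1 hb with rfl | h1 <;> rcases Finset.mem_insert.1 hc with rfl | h2
          · exact absurd rfl hne
          · rw [Finset.disjoint_left]
            intro x hx hxc
            rcases Finset.mem_insert.1 hx with rfl | hxw
            · exact ha (heraseS c h2 hxc)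
            · exact Finset.disjoint_left.1
                (hWp.2.2 w hwW c (Finset.mem_of_mem_erase h2) (Finset.ne_of_mem_erase h2).symm)
                hxw hxc
          · rw [Finset.disjoint_right]
            intro x hx hxc
            rcases Finset.mem_insert.1 hx with rfl | hxw
            · exact ha (heraseS b h1 hxc)
            · exact Finset.disjoint_left.1
                (hWp.2.2 w hwW b (Finset.mem_of_mem_erase h1) (Finset.ne_of_mem_erase h1).symm)
                hxw hxc
          · exact hWp.2.2 b (Finset.mem_of_mem_erase h1) c (Finset.mem_of_mem_erase h2) hne
      · have h1 : restrictPart ({(insert a w : Finset α)} : Finset (Finset α)) S = {w} := by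
          rw [restrictPart, Finset.image_singleton, Finset.insert_inter_of_notMem ha,
            Finset.inter_eq_left.2 hwS, Finset.filter_singleton, if_pos hwne]
        have h2 : restrictPart (W.erase w) S = W.erase w :=
          restrict_eq_self (fun b hb => hWp.1 b (Finset.mem_of_mem_erase hb)) heraseS
        rw [Finset.insert_eq, restrict_union, h1, h2, ← Finset.insert_eq,
          Finset.insert_erase hwW]

lemma mobius_sum : ∀ (T : Finset α), T.Nonempty →
    ∑ Γ ∈ partitionsOf T, ((Γ.card - 1).factorial : ℝ) * (-1 : ℝ) ^ (Γ.card - 1)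
      = if T.card = 1 then 1 else 0 := by
  intro T hTne
  induction hTne using Finset.Nonempty.cons_induction with
  | singleton a =>
    rw [partitionsOf_singleton, Finset.sum_singleton]
    simp
  | cons a S haS hS ih =>
    have hSpos : 0 < S.card := Finset.card_pos.2 hS
    have hcard : (Finset.cons a S haS).card ≠ 1 := by
      rw [Finset.card_cons]; omega
    rw [if_neg hcard]
    rw [← Finset.sum_fiberwise_of_maps_to (g := fun Γ => restrictPart Γ S)
      (t := partitionsOf S)
      (fun Γ hΓ => mem_partitionsOf.2
        (restrict_isPartition' (mem_partitionsOf.1 hΓ) (Finset.subset_cons haS)))]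
    apply Finset.sum_eq_zero
    intro W hW
    have hWp := mem_partitionsOf.1 hW
    have hblocksS : ∀ w' ∈ W, w' ⊆ S := fun w' hw' => block_subset hWp hw'
    have hWne : W.Nonempty := by
      obtain ⟨x, hx⟩ := hS
      obtain ⟨b, hb, -⟩ := exists_block hWp hx
      exact ⟨b, hb⟩
    have hWpos : 0 < W.card := Finset.card_pos.2 hWne
    have haW : ({a} : Finset α) ∉ W :=
      fun h => haS (hblocksS _ h (Finset.mem_singleton_self a))
    have hnotim : insert {a} W ∉ W.image (fun w => insert (insert a w) (W.erase w)) := by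
      rw [Finset.mem_image]
      rintro ⟨w, hw, heq⟩
      have h1 : insert a w ∈ insert ({a} : Finset α) W :=
        heq ▸ Finset.mem_insert_self _ _
      rcases Finset.mem_insert.1 h1 with h2 | h2
      · obtain ⟨x, hx⟩ := hWp.1 w hw
        have : x ∈ ({a} : Finset α) := h2 ▸ Finset.mem_insert_of_mem hx
        rw [Finset.mem_singleton] at this
        exact haS (hblocksS w hw (this ▸ hx))
      · exact haS (hblocksS _ h2 (Finset.mem_insert_self a w))
    have hinj : ∀ w ∈ W, ∀ w' ∈ W,
        (insert (insert a w) (W.erase w)) = (insert (insert a w') (W.erase w')) → w = w' := by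
      intro w hw w' hw' heq
      have h1 : insert a w ∈ insert (insert a w') (W.erase w') :=
        heq ▸ Finset.mem_insert_self _ _
      rcases Finset.mem_insert.1 h1 with h2 | h2
      · have haw : a ∉ w := fun h => haS (hblocksS w hw h)
        have haw' : a ∉ w' := fun h => haS (hblocksS w' hw' h)
        rw [← Finset.erase_insert haw, h2, Finset.erase_insert haw']
      · exact absurd (hblocksS _ (Finset.mem_of_mem_erase h2) (Finset.mem_insert_self a w))
          haS
    rw [fiber_insert haS hW, Finset.sum_insert hnotim, Finset.sum_image hinj]
    have hc1 : (insert ({a} : Finset α) W).card = W.card + 1 :=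
      Finset.card_insert_of_notMem haW
    have hc2 : ∀ w ∈ W, (insert (insert a w) (W.erase w)).card = W.card := by
      intro w hw
      have h1 : insert a w ∉ W.erase w :=
        fun h => haS (hblocksS _ (Finset.mem_of_mem_erase h) (Finset.mem_insert_self a w))
      rw [Finset.card_insert_of_notMem h1, Finset.card_erase_of_mem hw]
      omega
    rw [hc1, Finset.sum_congr rfl (fun w hw => by rw [hc2 w hw])]
    rw [Finset.sum_const, nsmul_eq_mul]
    obtain ⟨k, hk⟩ : ∃ k, W.card = k + 1 := ⟨W.card - 1, by omega⟩
    rw [hk]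
    have e1 : k + 1 + 1 - 1 = k + 1 := by omega
    have e2 : k + 1 - 1 = k := by omega
    rw [e1, e2, Nat.factorial_succ]
    push_cast
    rw [pow_succ]
    ring

/- ===== summing over coarsenings ===== -/

lemma coarse_filter_sup {A : Finset α} {V Γ : Finset (Finset α)} (hVp : IsPartitionOf A V)
    (hΓp : IsPartitionOf A Γ) (href : Refines V Γ) {c : Finset α} (hc : c ∈ Γ) :
    (V.filter (fun b => b ⊆ c)).sup id = c := by
  apply Finset.Subset.antisymm
  · intro x hx
    rw [Finset.mem_sup] at hx
    obtain ⟨b, hb, hxb⟩ := hx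
    exact (Finset.mem_filter.1 hb).2 hxb
  · intro x hx
    obtain ⟨b, hb, hxb⟩ := exists_block hVp (block_subset hΓp hc hx)
    obtain ⟨c', hc', hbc'⟩ := href b hb
    have hcc : c' = c := block_unique hΓp hc' hc (hbc' hxb) hx
    subst hcc
    rw [Finset.mem_sup]
    exact ⟨b, Finset.mem_filter.2 ⟨hb, hbc'⟩, hxb⟩

lemma sup_disjoint_of_disjoint {A : Finset α} {V : Finset (Finset α)}
    (hVp : IsPartitionOf A V) {w w' : Finset (Finset α)} (hw : w ⊆ V) (hw' : w' ⊆ V)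
    (hd : Disjoint w w') : Disjoint (w.sup id) (w'.sup id) := by
  rw [Finset.disjoint_left]
  intro x hx hx'
  rw [Finset.mem_sup] at hx hx'
  obtain ⟨b, hb, hxb⟩ := hx
  obtain ⟨b', hb', hxb'⟩ := hx'
  have hbb : b = b' := block_unique hVp (hw hb) (hw' hb') hxb hxb'
  subst hbb
  exact Finset.disjoint_left.1 hd hb hb'

lemma filter_sup_eq_self {A : Finset α} {V : Finset (Finset α)} {W : Finset (Finset (Finset α))}
    (hVp : IsPartitionOf A V) (hWp : IsPartitionOf V W) {w : Finset (Finset α)} (hw : w ∈ W) :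
    V.filter (fun b => b ⊆ w.sup id) = w := by
  apply Finset.Subset.antisymm
  · intro b hb
    obtain ⟨hbV, hbsup⟩ := Finset.mem_filter.1 hb
    obtain ⟨w', hw', hbw'⟩ := exists_block hWp hbV
    by_cases hww : w' = w
    · exact hww ▸ hbw'
    · exfalso
      have hd : Disjoint (w.sup id) (w'.sup id) :=
        sup_disjoint_of_disjoint hVp (block_subset hWp hw) (block_subset hWp hw')
          (hWp.2.2 w hw w' hw' (fun h => hww (h.symm)))
      obtain ⟨x, hx⟩ := hVp.1 b hbV
      exact Finset.disjoint_left.1 hd (hbsup hx)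
        (Finset.mem_sup.2 ⟨b, hbw', hx⟩)
  · intro b hb
    exact Finset.mem_filter.2 ⟨block_subset hWp hw hb, Finset.le_sup (f := id) hb⟩

lemma coarse_sum {A : Finset α} {V : Finset (Finset α)} (hAne : A.Nonempty)
    (hV : V ∈ partitionsOf A) :
    ∑ Γ ∈ (partitionsOf A).filter (fun Γ => Refines V Γ),
        ((Γ.card - 1).factorial : ℝ) * (-1 : ℝ) ^ (Γ.card - 1)
      = if V.card = 1 then 1 else 0 := by
  have hVp := mem_partitionsOf.1 hV
  have hVne : V.Nonempty := by
    obtain ⟨x, hx⟩ := hAne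
    obtain ⟨b, hb, -⟩ := exists_block hVp hx
    exact ⟨b, hb⟩
  rw [← mobius_sum V hVne]
  refine Finset.sum_nbij' (fun Γ => Γ.image (fun c => V.filter (fun b => b ⊆ c)))
    (fun W => W.image (fun w => w.sup id)) ?_ ?_ ?_ ?_ ?_
  · -- forward membership
    intro Γ hΓ
    obtain ⟨hΓ1, href⟩ := Finset.mem_filter.1 hΓ
    have hΓp := mem_partitionsOf.1 hΓ1
    refine mem_partitionsOf.2 ⟨?_, ?_, ?_⟩
    · intro w hw
      obtain ⟨c, hc, rfl⟩ := Finset.mem_image.1 hw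
      obtain ⟨x, hx⟩ := hΓp.1 c hc
      have hsup := coarse_filter_sup hVp hΓp href hc
      rw [← hsup, Finset.mem_sup] at hx
      obtain ⟨b, hb, -⟩ := hx
      exact ⟨b, hb⟩
    · apply Finset.Subset.antisymm
      · intro b hb
        rw [Finset.mem_sup] at hb
        obtain ⟨w, hw, hbw⟩ := hb
        obtain ⟨c, hc, rfl⟩ := Finset.mem_image.1 hw
        exact (Finset.mem_filter.1 hbw).1
      · intro b hb
        obtain ⟨c, hc, hbc⟩ := href b hb
        rw [Finset.mem_sup]
        exact ⟨V.filter (fun b => b ⊆ c), Finset.mem_image_of_mem _ hc,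
          Finset.mem_filter.2 ⟨hb, hbc⟩⟩
    · intro w hw w' hw' hne
      obtain ⟨c, hc, rfl⟩ := Finset.mem_image.1 hw
      obtain ⟨c', hc', rfl⟩ := Finset.mem_image.1 hw'
      have hcc : c ≠ c' := fun h => hne (h ▸ rfl)
      rw [Finset.disjoint_left]
      intro b hb hb'
      obtain ⟨hbV, hbc⟩ := Finset.mem_filter.1 hb
      obtain ⟨-, hbc'⟩ := Finset.mem_filter.1 hb'
      obtain ⟨x, hx⟩ := hVp.1 b hbV
      exact Finset.disjoint_left.1 (hΓp.2.2 c hc c' hc' hcc) (hbc hx) (hbc' hx)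
  · -- backward membership
    intro W hW
    have hWp := mem_partitionsOf.1 hW
    rw [Finset.mem_filter]
    constructor
    · refine mem_partitionsOf.2 ⟨?_, ?_, ?_⟩
      · intro c hc
        obtain ⟨w, hw, rfl⟩ := Finset.mem_image.1 hc
        obtain ⟨b, hb⟩ := hWp.1 w hw
        obtain ⟨x, hx⟩ := hVp.1 b (block_subset hWp hw hb)
        exact ⟨x, Finset.mem_sup.2 ⟨b, hb, hx⟩⟩
      · apply Finset.Subset.antisymm
        · intro x hx
          rw [Finset.mem_sup] at hx
          obtain ⟨c, hc, hxc⟩ := hx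
          obtain ⟨w, hw, rfl⟩ := Finset.mem_image.1 hc
          simp only [id_eq] at hxc
          rw [Finset.mem_sup] at hxc
          obtain ⟨b, hb, hxb⟩ := hxc
          exact block_subset hVp (block_subset hWp hw hb) hxb
        · intro x hx
          obtain ⟨b, hb, hxb⟩ := exists_block hVp hx
          obtain ⟨w, hw, hbw⟩ := exists_block hWp hb
          rw [Finset.mem_sup]
          exact ⟨w.sup id, Finset.mem_image_of_mem _ hw, Finset.mem_sup.2 ⟨b, hbw, hxb⟩⟩
      · intro c hc c' hc' hne
        obtain ⟨w, hw, rfl⟩ := Finset.mem_image.1 hc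
        obtain ⟨w', hw', rfl⟩ := Finset.mem_image.1 hc'
        have hww : w ≠ w' := fun h => hne (h ▸ rfl)
        exact sup_disjoint_of_disjoint hVp (block_subset hWp hw) (block_subset hWp hw')
          (hWp.2.2 w hw w' hw' hww)
    · intro b hb
      obtain ⟨w, hw, hbw⟩ := exists_block hWp hb
      exact ⟨w.sup id, Finset.mem_image_of_mem _ hw, Finset.le_sup (f := id) hbw⟩
  · -- left inverse
    intro Γ hΓ
    obtain ⟨hΓ1, href⟩ := Finset.mem_filter.1 hΓ
    have hΓp := mem_partitionsOf.1 hΓ1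
    rw [Finset.image_image]
    calc Γ.image (fun c => (V.filter (fun b => b ⊆ c)).sup id)
        = Γ.image id := Finset.image_congr (fun c hc => coarse_filter_sup hVp hΓp href hc)
      _ = Γ := Finset.image_id
  · -- right inverse
    intro W hW
    have hWp := mem_partitionsOf.1 hW
    rw [Finset.image_image]
    calc W.image (fun w => V.filter (fun b => b ⊆ w.sup id))
        = W.image id := Finset.image_congr (fun w hw => filter_sup_eq_self hVp hWp hw)
      _ = W := Finset.image_id
  · -- values
    intro Γ hΓ
    obtain ⟨hΓ1, href⟩ := Finset.mem_filter.1 hΓ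
    have hΓp := mem_partitionsOf.1 hΓ1
    have hcard : (Γ.image (fun c => V.filter (fun b => b ⊆ c))).card = Γ.card := by
      apply Finset.card_image_of_injOn
      intro c hc c' hc' heq
      dsimp only at heq
      calc c = (V.filter (fun b => b ⊆ c)).sup id := (coarse_filter_sup hVp hΓp href hc).symm
        _ = (V.filter (fun b => b ⊆ c')).sup id := by rw [heq]
        _ = c' := coarse_filter_sup hVp hΓp href hc'
    rw [hcard]

lemma partition_nonempty {A : Finset α} (hAne : A.Nonempty) {Γ : Finset (Finset α)}
    (h : IsPartitionOf A Γ) : Γ.Nonempty := by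
  rcases Finset.eq_empty_or_nonempty Γ with rfl | h2
  · exfalso
    obtain ⟨x, hx⟩ := hAne
    have h3 := h.2.1
    rw [Finset.sup_empty] at h3
    rw [← h3] at hx
    exact Finset.notMem_empty x hx
  · exact h2

lemma singleton_mem_partitionsOf {A : Finset α} (hAne : A.Nonempty) :
    ({A} : Finset (Finset α)) ∈ partitionsOf A := by
  refine mem_partitionsOf.2 ⟨?_, Finset.sup_singleton, ?_⟩
  · intro b hb
    rw [Finset.mem_singleton] at hb
    exact hb ▸ hAne
  · intro b hb c hc hne
    rw [Finset.mem_singleton] at hb hc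
    exact absurd (hb.trans hc.symm) hne

theorem stmt1 (B : Finset α) (m : Finset α → ℝ)
    (J : Finset (Finset α) → Finset (Finset α) → ℝ)
    (hm : ∀ A ⊆ B, A.Nonempty →
      m A = ∑ Δ ∈ partitionsOf A, ∑ p ∈ pairingsOf A, J Δ p)
    (hfact : ∀ A ⊆ B, A.Nonempty → ∀ Δ ∈ partitionsOf A, ∀ p ∈ pairingsOf A,
      ∀ U ∈ partitionsOf A,
        (∀ b ∈ Δ, ∃ c ∈ U, b ⊆ c) → (∀ b ∈ p, ∃ c ∈ U, b ⊆ c) →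
        (∀ c ∈ U, ConnectedPair c (restrictPart Δ c) (restrictPart p c)) →
        J Δ p = ∏ c ∈ U, J (restrictPart Δ c) (restrictPart p c)) :
    ∀ A ⊆ B, A.Nonempty →
      cumulantOf m A = ∑ Δ ∈ partitionsOf A, ∑ p ∈ pairingsOf A,
        (if ConnectedPair A Δ p then J Δ p else 0) := by
  intro A hAB hAne
  have hmK : ∀ A' ⊆ B, A'.Nonempty → m A' = ∑ U ∈ partitionsOf A', ∏ c ∈ U, connSum J c := by
    intro A' hA'B hA'ne
    rw [hm A' hA'B hA'ne, ← Finset.sum_product']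
    rw [← Finset.sum_fiberwise_of_maps_to (g := fun z => joinPart A' z.1 z.2)
      (t := partitionsOf A')
      (fun z hz => by
        rw [Finset.mem_product] at hz
        exact mem_partitionsOf.2 (joinPart_isPartition (mem_partitionsOf.1 hz.1)
          (mem_partitionsOf.1 (mem_pairingsOf.1 hz.2).1)))]
    refine Finset.sum_congr rfl fun U hU => ?_
    have hUp := mem_partitionsOf.1 hU
    have hsup : U.sup id = A' := hUp.2.1
    have hUne : U.Nonempty := partition_nonempty hA'ne hUp
    have hfib : fiberSet U = (partitionsOf A' ×ˢ pairingsOf A').filter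
        (fun z => joinPart A' z.1 z.2 = U) := by
      simp only [fiberSet, hsup]
    rw [← hfib]
    exact fiber_sum B J hfact U hUne hUp.1 hUp.2.2 (hsup ▸ hA'B)
  show cumulantOf m A = connSum J A
  calc cumulantOf m A
      = ∑ Γ ∈ partitionsOf A, ((Γ.card - 1).factorial : ℝ) * (-1 : ℝ) ^ (Γ.card - 1) *
          ∑ V ∈ (partitionsOf A).filter (fun V => Refines V Γ), ∏ d ∈ V, connSum J d := by
        rw [cumulantOf]
        refine Finset.sum_congr rfl fun Γ hΓ => ?_
        have hΓp := mem_partitionsOf.1 hΓ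
        have hΓne : Γ.Nonempty := partition_nonempty hAne hΓp
        congr 1
        calc ∏ A' ∈ Γ, m A'
            = ∏ A' ∈ Γ, ∑ U ∈ partitionsOf A', ∏ c ∈ U, connSum J c :=
              Finset.prod_congr rfl fun A' hA' =>
                hmK A' ((block_subset hΓp hA').trans hAB) (hΓp.1 A' hA')
          _ = ∑ V ∈ (partitionsOf (Γ.sup id)).filter (fun V => Refines V Γ),
                ∏ d ∈ V, connSum J d := refine_sum (connSum J) Γ hΓne hΓp.1 hΓp.2.2
          _ = ∑ V ∈ (partitionsOf A).filter (fun V => Refines V Γ),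
                ∏ d ∈ V, connSum J d := by rw [hΓp.2.1]
    _ = ∑ Γ ∈ partitionsOf A, ∑ V ∈ partitionsOf A,
          (if Refines V Γ then ((Γ.card - 1).factorial : ℝ) * (-1 : ℝ) ^ (Γ.card - 1) *
            ∏ d ∈ V, connSum J d else 0) := by
        refine Finset.sum_congr rfl fun Γ hΓ => ?_
        rw [Finset.mul_sum, Finset.sum_filter]
    _ = ∑ V ∈ partitionsOf A, ∑ Γ ∈ partitionsOf A,
          (if Refines V Γ then ((Γ.card - 1).factorial : ℝ) * (-1 : ℝ) ^ (Γ.card - 1) *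
            ∏ d ∈ V, connSum J d else 0) := Finset.sum_comm
    _ = ∑ V ∈ partitionsOf A, (∏ d ∈ V, connSum J d) *
          ∑ Γ ∈ (partitionsOf A).filter (fun Γ => Refines V Γ),
            ((Γ.card - 1).factorial : ℝ) * (-1 : ℝ) ^ (Γ.card - 1) := by
        refine Finset.sum_congr rfl fun V hV => ?_
        rw [Finset.mul_sum, Finset.sum_filter]
        refine Finset.sum_congr rfl fun Γ hΓ => ?_
        split_ifs with h
        · ring
        · rfl
    _ = ∑ V ∈ partitionsOf A, (∏ d ∈ V, connSum J d) *
          (if V.card = 1 then (1 : ℝ) else 0) := by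
        refine Finset.sum_congr rfl fun V hV => ?_
        rw [coarse_sum hAne hV]
    _ = connSum J A := by
        rw [Finset.sum_eq_single ({A} : Finset (Finset α))]
        · rw [Finset.prod_singleton, Finset.card_singleton, if_pos rfl, mul_one]
        · intro V hV hne
          have hVp := mem_partitionsOf.1 hV
          by_cases h : V.card = 1
          · exfalso
            obtain ⟨b, rfl⟩ := Finset.card_eq_one.1 h
            have hb := hVp.2.1
            rw [Finset.sup_singleton] at hb
            have hbA : b = A := hb
            exact hne (by rw [hbA])
          · rw [if_neg h, mul_zero]
        · intro h
          exact absurd (singleton_mem_partitionsOf hAne) h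
end

section
/- Let U, V be Banach spaces, T > 0, β ∈ (1/2,1], and 0 < α ≤ γ < 1 with α + β > 1. Let f ∈ C^α([0,T],V), X ∈ C^β([0,T],U), A ∈ C^γ([0,T], L(V, L(U,V))), and suppose Y : [0,T] → V solves the controlled Young equation Y_t = Y_0 + ∫_0^t A_s Y_s dX_s + f_{0,t}. Then there exist constants C₁, C₂ > 0, depending only on α, β, γ, T and ‖A‖_∞, such that ‖Y‖_∞ ≤ C₁ exp( C₂ ( ‖A‖_γ^{1/γ} + ‖X‖_β^{1/β} ) ) ( ‖Y_0‖ + ‖f‖_α ). -/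
open Real
open Filter

/-- Supremum norm of a path on `[0,T]`. -/
noncomputable def sNorm {V : Type*} [NormedAddCommGroup V] (T : ℝ) (x : ℝ → V) : ℝ :=
  sSup {y : ℝ | ∃ u : ℝ, 0 ≤ u ∧ u ≤ T ∧ y = ‖x u‖}

/-- `a`-Hölder seminorm of a path on the interval `[s,t]`. -/
noncomputable def hNormOn {V : Type*} [NormedAddCommGroup V] (a s t : ℝ) (x : ℝ → V) : ℝ :=
  sSup {y : ℝ | ∃ u v : ℝ, s ≤ u ∧ u < v ∧ v ≤ t ∧ y = ‖x v - x u‖ / (v - u) ^ a}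

/-- `a`-Hölder seminorm of a path on `[0,T]`. -/
noncomputable def hNorm {V : Type*} [NormedAddCommGroup V] (a T : ℝ) (x : ℝ → V) : ℝ :=
  hNormOn a 0 T x

/-- The path `x` is `a`-Hölder continuous on `[0,T]`. -/
def HolderOn {V : Type*} [NormedAddCommGroup V] (a T : ℝ) (x : ℝ → V) : Prop :=
  ∃ K : ℝ, ∀ u v : ℝ, 0 ≤ u → u ≤ v → v ≤ T → ‖x v - x u‖ ≤ K * (v - u) ^ a

/-- `Y` solves the controlled Young equation `Y_t = Y_0 + ∫_0^t A_s Y_s dX_s + f_{0,t}`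
on `[0,T]`: there is an additive two-parameter map `I` (the Young integral) with
`Y_t = Y_0 + I_{0,t} + f_{0,t}` satisfying the Young sewing estimate
`‖I_{s,t} − A_s Y_s X_{s,t}‖ ≤ 2^{a+b} ζ(a+b) ‖A·Y·‖_{a;[s,t]} ‖X‖_b (t−s)^{a+b}`. -/
def SolvesCYE {U V : Type*} [NormedAddCommGroup U] [NormedSpace ℝ U]
    [NormedAddCommGroup V] [NormedSpace ℝ V]
    (a b T : ℝ) (A : ℝ → V →L[ℝ] U →L[ℝ] V) (Y : ℝ → V) (X : ℝ → U) (f : ℝ → V) : Prop :=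
  ∃ I : ℝ → ℝ → V,
    (∀ s u t : ℝ, 0 ≤ s → s ≤ u → u ≤ t → t ≤ T → I s t = I s u + I u t) ∧
    (∀ t : ℝ, 0 ≤ t → t ≤ T → Y t = Y 0 + I 0 t + (f t - f 0)) ∧
    (∀ s t : ℝ, 0 ≤ s → s ≤ t → t ≤ T →
      ‖I s t - A s (Y s) (X t - X s)‖ ≤
        (2 : ℝ) ^ (a + b) * (∑' n : ℕ, ((n : ℝ) + 1) ^ (-(a + b))) *
          hNormOn a s t (fun r => A r (Y r)) * hNorm b T X * (t - s) ^ (a + b))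


section helpers
variable {V : Type*} [NormedAddCommGroup V]

lemma hNormOn_nonneg (a s t : ℝ) (x : ℝ → V) : 0 ≤ hNormOn a s t x := by
  apply Real.sSup_nonneg
  rintro y ⟨u, v, hu, huv, hv, rfl⟩
  exact div_nonneg (norm_nonneg _) (Real.rpow_nonneg (by linarith) a)

lemma hNorm_nonneg (a T : ℝ) (x : ℝ → V) : 0 ≤ hNorm a T x := hNormOn_nonneg a 0 T x

lemma norm_sub_le_hNorm {a T : ℝ} (ha : 0 < a) {x : ℝ → V}
    (hx : HolderOn a T x) {u v : ℝ} (hu : 0 ≤ u) (huv : u ≤ v) (hv : v ≤ T) :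
    ‖x v - x u‖ ≤ hNorm a T x * (v - u) ^ a := by
  obtain ⟨K, hK⟩ := hx
  rcases eq_or_lt_of_le huv with rfl | hlt
  · simp [Real.zero_rpow (ne_of_gt ha)]
  · have hd : (0:ℝ) < (v - u) ^ a := Real.rpow_pos_of_pos (by linarith) a
    have hbdd : BddAbove {y : ℝ | ∃ u' v' : ℝ, (0:ℝ) ≤ u' ∧ u' < v' ∧ v' ≤ T ∧
        y = ‖x v' - x u'‖ / (v' - u') ^ a} := by
      refine ⟨K, ?_⟩
      rintro y ⟨u', v', hu', huv', hv', rfl⟩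
      have hd' : (0:ℝ) < (v' - u') ^ a := Real.rpow_pos_of_pos (by linarith) a
      rw [div_le_iff₀ hd']
      exact hK u' v' hu' huv'.le hv'
    have hmem : ‖x v - x u‖ / (v - u) ^ a ∈ {y : ℝ | ∃ u' v' : ℝ, (0:ℝ) ≤ u' ∧ u' < v' ∧ v' ≤ T ∧
        y = ‖x v' - x u'‖ / (v' - u') ^ a} := ⟨u, v, hu, hlt, hv, rfl⟩
    have h9 := le_csSup hbdd hmem
    rw [div_le_iff₀ hd] at h9
    exact h9

lemma hNormOn_mono {a s t u v : ℝ} (x : ℝ → V) (hsu : s ≤ u) (hvt : v ≤ t)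
    (hbdd : BddAbove {y : ℝ | ∃ u' v' : ℝ, s ≤ u' ∧ u' < v' ∧ v' ≤ t ∧
      y = ‖x v' - x u'‖ / (v' - u') ^ a}) :
    hNormOn a u v x ≤ hNormOn a s t x := by
  by_cases hne : {y : ℝ | ∃ u' v' : ℝ, u ≤ u' ∧ u' < v' ∧ v' ≤ v ∧
      y = ‖x v' - x u'‖ / (v' - u') ^ a}.Nonempty
  · apply csSup_le_csSup hbdd hne
    rintro y ⟨u', v', h1, h2, h3, rfl⟩
    exact ⟨u', v', le_trans hsu h1, h2, le_trans h3 hvt, rfl⟩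
  · unfold hNormOn
    rw [Set.not_nonempty_iff_eq_empty.mp hne, Real.sSup_empty]
    exact hNormOn_nonneg a s t x

end helpers

section key
variable {U V : Type*} [NormedAddCommGroup U] [NormedSpace ℝ U]
  [NormedAddCommGroup V] [NormedSpace ℝ V]

set_option maxHeartbeats 2000000 in
lemma key (T al be ga M KA KX Kf B c h D : ℝ)
    (A : ℝ → V →L[ℝ] U →L[ℝ] V) (Y : ℝ → V) (X : ℝ → U) (f : ℝ → V) (I : ℝ → ℝ → V)
    (hal : 0 < al) (hbe : 0 < be) (halbe : 1 < al + be) (halga : al ≤ ga)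
    (hM : 0 ≤ M) (hKA : 0 ≤ KA) (hKX : 0 ≤ KX) (hKf : 0 ≤ Kf) (hB : 0 ≤ B)
    (hD : 0 ≤ D) (hh : 0 < h)
    (hc : c = 2 / ((2:ℝ) ^ (be + min al be) - 2))
    (hp : 1 < be + min al be)
    (hsmall1 : M * (KX * h ^ be) ≤ ((2:ℝ) ^ (be + min al be) - 2) / 2)
    (hsmall2 : M * (KX * h ^ be) ≤ (1 - (2:ℝ) ^ (1 - (al + be))) / 2)
    (hAM : ∀ r, 0 ≤ r → r ≤ T → ‖A r‖ ≤ M)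
    (hAH : ∀ u v : ℝ, 0 ≤ u → u ≤ v → v ≤ T → ‖A v - A u‖ ≤ KA * (v - u) ^ ga)
    (hXH : ∀ u v : ℝ, 0 ≤ u → u ≤ v → v ≤ T → ‖X v - X u‖ ≤ KX * (v - u) ^ be)
    (hfH : ∀ u v : ℝ, 0 ≤ u → u ≤ v → v ≤ T → ‖f v - f u‖ ≤ Kf * (v - u) ^ al)
    (Iadd : ∀ s u t : ℝ, 0 ≤ s → s ≤ u → u ≤ t → t ≤ T → I s t = I s u + I u t)
    (Ieq : ∀ t : ℝ, 0 ≤ t → t ≤ T → Y t = Y 0 + I 0 t + (f t - f 0))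
    (Isew : ∀ s t : ℝ, 0 ≤ s → s ≤ t → t ≤ T →
      ‖I s t - A s (Y s) (X t - X s)‖ ≤
        D * hNormOn al s t (fun r => A r (Y r)) * KX * (t - s) ^ (al + be))
    (s u : ℝ) (hs : 0 ≤ s) (hsu : s ≤ u) (huT : u ≤ T) (hd : u - s ≤ h)
    (hYB : ∀ r, s ≤ r → r ≤ u → ‖Y r‖ ≤ B) :
    ‖I s u - A s (Y s) (X u - X s)‖ ≤
      c * KX * (u - s) ^ be *
        (KA * B * (u - s) ^ ga + M ^ 2 * B * KX * (u - s) ^ be + M * Kf * (u - s) ^ al) := by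
  -- basic facts
  have h2p : (0:ℝ) < (2:ℝ) ^ (be + min al be) - 2 := by
    have : (2:ℝ) ^ (1:ℝ) < (2:ℝ) ^ (be + min al be) :=
      Real.rpow_lt_rpow_of_exponent_lt (by norm_num) hp
    rw [Real.rpow_one] at this; linarith only [this]
  have hc0 : 0 < c := by rw [hc]; positivity
  have hq0 : 0 < min al be := lt_min hal hbe
  have hqal : min al be ≤ al := min_le_left _ _
  have hqbe : min al be ≤ be := min_le_right _ _
  have hqga : min al be ≤ ga := le_trans hqal halga
  have hga : 0 < ga := lt_of_lt_of_le hal halga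
  have Itriv : ∀ r : ℝ, 0 ≤ r → r ≤ T → I r r = 0 := by
    intro r h0 hT0
    have h := Iadd r r r h0 le_rfl le_rfl hT0
    exact (left_eq_add.mp h)
  have Rnn : ∀ d : ℝ, 0 ≤ d →
      0 ≤ c * KX * d ^ be * (KA * B * d ^ ga + M ^ 2 * B * KX * d ^ be + M * Kf * d ^ al) := by
    intro d hd0
    have h1 := Real.rpow_nonneg hd0 be
    have h2 := Real.rpow_nonneg hd0 ga
    have h3 := Real.rpow_nonneg hd0 al
    have : 0 ≤ KA * B * d ^ ga + M ^ 2 * B * KX * d ^ be + M * Kf * d ^ al := by positivity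
    positivity
  rcases eq_or_lt_of_le hsu with rfl | hlt
  · have h0 : I s s - A s (Y s) (X s - X s) = 0 := by
      rw [Itriv s hs huT]; simp
    rw [h0, norm_zero, sub_self, Real.zero_rpow (ne_of_gt hbe)]
    simp
  -- nondegenerate case
  have husT : s ≤ T := le_trans hsu huT
  obtain ⟨S, hSdef⟩ : ∃ S : Set ℝ, S = {y : ℝ | ∃ u' v' : ℝ, s ≤ u' ∧ u' < v' ∧ v' ≤ u ∧
      y = ‖A v' (Y v') - A u' (Y u')‖ / (v' - u') ^ al} := ⟨_, rfl⟩
  by_cases hbdd : BddAbove S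
  · -- bounded case: dyadic induction
    obtain ⟨W, hWdef⟩ : ∃ W : ℝ, W = hNormOn al s u (fun r => A r (Y r)) := ⟨_, rfl⟩
    have hW0 : 0 ≤ W := hWdef ▸ hNormOn_nonneg _ _ _ _
    have hsub : ∀ p q' : ℝ, s ≤ p → q' ≤ u →
        hNormOn al p q' (fun r => A r (Y r)) ≤ W := by
      intro p q' h1 h2
      rw [hWdef]
      refine hNormOn_mono (fun r => A r (Y r)) h1 h2 ?_
      rw [hSdef] at hbdd
      exact hbdd
    obtain ⟨κ, hκdef⟩ : ∃ κ : ℝ, κ = (2:ℝ) ^ (1 - (al + be)) + M * (KX * h ^ be) := ⟨_, rfl⟩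
    have ht0 : (0:ℝ) < (2:ℝ) ^ (1 - (al + be)) := Real.rpow_pos_of_pos (by norm_num) _
    have ht1 : (2:ℝ) ^ (1 - (al + be)) < 1 :=
      Real.rpow_lt_one_of_one_lt_of_neg (by norm_num) (by linarith)
    have hκ0 : 0 ≤ κ := by
      have h9 : 0 ≤ M * (KX * h ^ be) := by positivity
      rw [hκdef]; linarith only [h9, ht0]
    have hκ1 : κ < 1 := by rw [hκdef]; linarith only [hsmall2, ht1]
    have hmain : ∀ n : ℕ, ∀ p q' : ℝ, s ≤ p → p ≤ q' → q' ≤ u →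
        ‖I p q' - A p (Y p) (X q' - X p)‖ ≤
          c * KX * (q' - p) ^ be *
            (KA * B * (q' - p) ^ ga + M ^ 2 * B * KX * (q' - p) ^ be + M * Kf * (q' - p) ^ al)
          + κ ^ n * (D * KX * W) * (q' - p) ^ (al + be) := by
      intro n
      induction n with
      | zero =>
        intro p q' h1 h2 h3
        have hp0 : 0 ≤ p := le_trans hs h1
        have hq'T : q' ≤ T := le_trans h3 huT
        rcases eq_or_lt_of_le h2 with rfl | h2'
        · have h0 : I p p - A p (Y p) (X p - X p) = 0 := by
            rw [Itriv p hp0 hq'T]; simp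
          rw [h0, norm_zero, sub_self, Real.zero_rpow (ne_of_gt hbe),
            Real.zero_rpow (by positivity : al + be ≠ 0)]
          simp
        · have hIs := Isew p q' hp0 h2 hq'T
          have hHW := hsub p q' h1 h3
          have hpw : 0 ≤ (q' - p) ^ (al + be) := Real.rpow_nonneg (by linarith) _
          have : D * hNormOn al p q' (fun r => A r (Y r)) * KX * (q' - p) ^ (al + be) ≤
              D * W * KX * (q' - p) ^ (al + be) := by gcongr
          have hfin : ‖I p q' - A p (Y p) (X q' - X p)‖ ≤
              κ ^ 0 * (D * KX * W) * (q' - p) ^ (al + be) := by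
            rw [pow_zero]
            calc ‖I p q' - A p (Y p) (X q' - X p)‖ ≤
                D * W * KX * (q' - p) ^ (al + be) := le_trans hIs this
              _ = 1 * (D * KX * W) * (q' - p) ^ (al + be) := by ring
          have h8 := Rnn (q' - p) (by linarith only [h2'])
          linarith only [hfin, h8]
      | succ n ih =>
        intro p q' h1 h2 h3
        have hp0 : 0 ≤ p := le_trans hs h1
        have hq'T : q' ≤ T := le_trans h3 huT
        rcases eq_or_lt_of_le h2 with rfl | h2'
        · have h0 : I p p - A p (Y p) (X p - X p) = 0 := by
            rw [Itriv p hp0 hq'T]; simp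
          rw [h0, norm_zero, sub_self, Real.zero_rpow (ne_of_gt hbe),
            Real.zero_rpow (by positivity : al + be ≠ 0)]
          simp
        · -- bisection step
          obtain ⟨m, hmdef⟩ : ∃ m : ℝ, m = p + (q' - p) / 2 := ⟨_, rfl⟩
          have hm1 : p ≤ m := by rw [hmdef]; linarith
          have hm2 : m ≤ q' := by rw [hmdef]; linarith

          have hmT : m ≤ T := le_trans hm2 hq'T
          have hm0 : 0 ≤ m := le_trans hp0 hm1
          obtain ⟨ee, heedef⟩ : ∃ ee : ℝ, ee = (q' - p) / 2 := ⟨_, rfl⟩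
          have hee0 : (0:ℝ) < ee := by rw [heedef]; linarith
          have hmp : m - p = ee := by rw [hmdef, heedef]; ring
          have hqm : q' - m = ee := by rw [hmdef, heedef]; ring
          have heeh : ee ≤ h := by
            have hus : q' - p ≤ u - s := by linarith
            rw [heedef]; linarith
          have hdd0 : (0:ℝ) < q' - p := by linarith
          have hpT : p ≤ T := le_trans h2 hq'T
          have hhalfpos : (0:ℝ) < 1/2 := by norm_num
          have he_be : ee ^ be = (q' - p) ^ be * (1/2:ℝ) ^ be := by
            rw [heedef, div_eq_mul_inv, ← one_div]
            exact Real.mul_rpow hdd0.le (by norm_num)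
          have he_ga : ee ^ ga = (q' - p) ^ ga * (1/2:ℝ) ^ ga := by
            rw [heedef, div_eq_mul_inv, ← one_div]
            exact Real.mul_rpow hdd0.le (by norm_num)
          have he_al : ee ^ al = (q' - p) ^ al * (1/2:ℝ) ^ al := by
            rw [heedef, div_eq_mul_inv, ← one_div]
            exact Real.mul_rpow hdd0.le (by norm_num)
          have he_ab : ee ^ (al + be) = (q' - p) ^ (al + be) * (1/2:ℝ) ^ (al + be) := by
            rw [heedef, div_eq_mul_inv, ← one_div]
            exact Real.mul_rpow hdd0.le (by norm_num)
          have ihPM := ih p m h1 hm1 (le_trans hm2 h3)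
          have ihMQ := ih m q' (le_trans h1 hm1) hm2 h3
          rw [hmp] at ihPM
          rw [hqm] at ihMQ
          obtain ⟨RR, hRRdef⟩ : ∃ RR : ℝ, RR = c * KX * ee ^ be *
              (KA * B * ee ^ ga + M ^ 2 * B * KX * ee ^ be + M * Kf * ee ^ al)
              + κ ^ n * (D * KX * W) * ee ^ (al + be) := ⟨_, rfl⟩
          rw [← hRRdef] at ihPM ihMQ
          -- nonnegativity facts
          have hee_be0 : 0 ≤ ee ^ be := Real.rpow_nonneg hee0.le _
          have hee_ga0 : 0 ≤ ee ^ ga := Real.rpow_nonneg hee0.le _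
          have hee_al0 : 0 ≤ ee ^ al := Real.rpow_nonneg hee0.le _
          have hee_ab0 : 0 ≤ ee ^ (al + be) := Real.rpow_nonneg hee0.le _
          have hdd_be0 : 0 ≤ (q' - p) ^ be := Real.rpow_nonneg hdd0.le _
          have hdd_ga0 : 0 ≤ (q' - p) ^ ga := Real.rpow_nonneg hdd0.le _
          have hdd_al0 : 0 ≤ (q' - p) ^ al := Real.rpow_nonneg hdd0.le _
          have hdd_ab0 : 0 ≤ (q' - p) ^ (al + be) := Real.rpow_nonneg hdd0.le _
          have hGee0 : 0 ≤ KA * B * ee ^ ga + M ^ 2 * B * KX * ee ^ be + M * Kf * ee ^ al := by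
            have a1 : 0 ≤ KA * B * ee ^ ga := by positivity
            have a2 : 0 ≤ M ^ 2 * B * KX * ee ^ be := by positivity
            have a3 : 0 ≤ M * Kf * ee ^ al := by positivity
            linarith only [a1, a2, a3]
          have hEn0 : 0 ≤ κ ^ n * (D * KX * W) := by
            have := pow_nonneg hκ0 n
            positivity
          have hRR0 : 0 ≤ RR := by
            rw [hRRdef]
            have a1 : 0 ≤ c * KX * ee ^ be *
                (KA * B * ee ^ ga + M ^ 2 * B * KX * ee ^ be + M * Kf * ee ^ al) := by
              have := hc0.le; positivity
            have a2 : 0 ≤ κ ^ n * (D * KX * W) * ee ^ (al + be) :=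
              mul_nonneg hEn0 hee_ab0
            linarith only [a1, a2]
          -- increment of Y on [p,m]
          have hYinc : ‖Y m - Y p‖ ≤ M * B * (KX * ee ^ be) + RR + Kf * ee ^ al := by
            have hy : Y m - Y p = (I p m - A p (Y p) (X m - X p)) + A p (Y p) (X m - X p)
                + (f m - f p) := by
              have e1 := Ieq m hm0 hmT
              have e2 := Ieq p hp0 hpT
              have hadd : I 0 m = I 0 p + I p m := Iadd 0 p m le_rfl hp0 hm1 hmT
              rw [e1, e2, hadd]; abel
            rw [hy]
            have n1 : ‖A p (Y p) (X m - X p)‖ ≤ M * B * (KX * ee ^ be) := by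
              have o1 : ‖A p (Y p) (X m - X p)‖ ≤ ‖A p (Y p)‖ * ‖X m - X p‖ :=
                ContinuousLinearMap.le_opNorm _ _
              have o2 : ‖A p (Y p)‖ ≤ ‖A p‖ * ‖Y p‖ := ContinuousLinearMap.le_opNorm _ _
              have o3 : ‖X m - X p‖ ≤ KX * ee ^ be := by
                have := hXH p m hp0 hm1 hmT; rwa [hmp] at this
              have o4 : ‖A p‖ * ‖Y p‖ ≤ M * B :=
                mul_le_mul (hAM p hp0 hpT) (hYB p h1 (le_trans h2 h3)) (norm_nonneg _) hM
              calc ‖A p (Y p) (X m - X p)‖ ≤ ‖A p (Y p)‖ * ‖X m - X p‖ := o1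
                _ ≤ (‖A p‖ * ‖Y p‖) * ‖X m - X p‖ :=
                    mul_le_mul_of_nonneg_right o2 (norm_nonneg _)
                _ ≤ (M * B) * (KX * ee ^ be) :=
                    mul_le_mul o4 o3 (norm_nonneg _) (by positivity)
            have n2 : ‖f m - f p‖ ≤ Kf * ee ^ al := by
              have := hfH p m hp0 hm1 hmT; rwa [hmp] at this
            calc ‖(I p m - A p (Y p) (X m - X p)) + A p (Y p) (X m - X p) + (f m - f p)‖
                ≤ ‖I p m - A p (Y p) (X m - X p)‖ + ‖A p (Y p) (X m - X p)‖ + ‖f m - f p‖ :=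
                  norm_add₃_le
              _ ≤ RR + M * B * (KX * ee ^ be) + Kf * ee ^ al := by
                  have h7 := add_le_add (add_le_add ihPM n1) n2; linarith only [h7]
              _ = M * B * (KX * ee ^ be) + RR + Kf * ee ^ al := by ring
          -- difference of A·Y on [p,m]
          have hAY : ‖A m (Y m) - A p (Y p)‖ ≤
              KA * B * ee ^ ga + M * (M * B * (KX * ee ^ be) + RR + Kf * ee ^ al) := by
            have hsplit : A m (Y m) - A p (Y p) = (A m - A p) (Y m) + (A p) (Y m - Y p) := by
              rw [ContinuousLinearMap.sub_apply, map_sub]; abel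
            rw [hsplit]
            have n1 : ‖(A m - A p) (Y m)‖ ≤ KA * B * ee ^ ga := by
              have o1 : ‖(A m - A p) (Y m)‖ ≤ ‖A m - A p‖ * ‖Y m‖ :=
                ContinuousLinearMap.le_opNorm _ _
              have o2 : ‖A m - A p‖ ≤ KA * ee ^ ga := by
                have := hAH p m hp0 hm1 hmT; rwa [hmp] at this
              have o3 : ‖Y m‖ ≤ B := hYB m (le_trans h1 hm1) (le_trans hm2 h3)
              calc ‖(A m - A p) (Y m)‖ ≤ ‖A m - A p‖ * ‖Y m‖ := o1
                _ ≤ (KA * ee ^ ga) * B := mul_le_mul o2 o3 (norm_nonneg _) (by positivity)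
                _ = KA * B * ee ^ ga := by ring
            have n2 : ‖(A p) (Y m - Y p)‖ ≤
                M * (M * B * (KX * ee ^ be) + RR + Kf * ee ^ al) := by
              have o1 : ‖(A p) (Y m - Y p)‖ ≤ ‖A p‖ * ‖Y m - Y p‖ :=
                ContinuousLinearMap.le_opNorm _ _
              exact le_trans o1 (mul_le_mul (hAM p hp0 hpT) hYinc (norm_nonneg _) hM)
            calc ‖(A m - A p) (Y m) + (A p) (Y m - Y p)‖
                ≤ ‖(A m - A p) (Y m)‖ + ‖(A p) (Y m - Y p)‖ := norm_add_le _ _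
              _ ≤ KA * B * ee ^ ga + M * (M * B * (KX * ee ^ be) + RR + Kf * ee ^ al) :=
                  add_le_add n1 n2
          -- X increment on [m,q']
          have hXmq : ‖X q' - X m‖ ≤ KX * ee ^ be := by
            have := hXH m q' hm0 hm2 hq'T; rwa [hqm] at this
          -- three-term identity
          have hid : I p q' - A p (Y p) (X q' - X p) =
              (I p m - A p (Y p) (X m - X p)) + (I m q' - A m (Y m) (X q' - X m)) +
              (A m (Y m) - A p (Y p)) (X q' - X m) := by
            have hior : I p q' = I p m + I m q' := Iadd p m q' hp0 hm1 hm2 hq'T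
            have hx : A p (Y p) (X q' - X p) =
                A p (Y p) (X m - X p) + A p (Y p) (X q' - X m) := by
              rw [← map_add]; congr 1; abel
            rw [hior, hx, ContinuousLinearMap.sub_apply]; abel
          -- assemble the three bounds
          have htot : ‖I p q' - A p (Y p) (X q' - X p)‖ ≤
              RR + RR + (KA * B * ee ^ ga + M * (M * B * (KX * ee ^ be) + RR + Kf * ee ^ al))
                * (KX * ee ^ be) := by
            rw [hid]
            have t3 : ‖(A m (Y m) - A p (Y p)) (X q' - X m)‖ ≤
                (KA * B * ee ^ ga + M * (M * B * (KX * ee ^ be) + RR + Kf * ee ^ al))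
                  * (KX * ee ^ be) := by
              have o1 : ‖(A m (Y m) - A p (Y p)) (X q' - X m)‖ ≤
                  ‖A m (Y m) - A p (Y p)‖ * ‖X q' - X m‖ :=
                ContinuousLinearMap.le_opNorm _ _
              have hnn : 0 ≤ KA * B * ee ^ ga + M * (M * B * (KX * ee ^ be) + RR + Kf * ee ^ al) := by
                have a1 : 0 ≤ KA * B * ee ^ ga := by positivity
                have a2 : 0 ≤ M * B * (KX * ee ^ be) := by positivity
                have a3 : 0 ≤ Kf * ee ^ al := by positivity
                have a4 : 0 ≤ M * (M * B * (KX * ee ^ be) + RR + Kf * ee ^ al) := by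
                  apply mul_nonneg hM; linarith only [a2, a3, hRR0]
                linarith only [a1, a4]
              exact le_trans o1 (mul_le_mul hAY hXmq (norm_nonneg _) hnn)
            calc ‖(I p m - A p (Y p) (X m - X p)) + (I m q' - A m (Y m) (X q' - X m)) +
                (A m (Y m) - A p (Y p)) (X q' - X m)‖
                ≤ ‖I p m - A p (Y p) (X m - X p)‖ + ‖I m q' - A m (Y m) (X q' - X m)‖ +
                  ‖(A m (Y m) - A p (Y p)) (X q' - X m)‖ := norm_add₃_le
              _ ≤ RR + RR + (KA * B * ee ^ ga + M * (M * B * (KX * ee ^ be) + RR + Kf * ee ^ al))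
                  * (KX * ee ^ be) := by
                  have h7 := add_le_add (add_le_add ihPM ihMQ) t3; linarith only [h7]
          -- algebraic regrouping
          have hexp : RR + RR + (KA * B * ee ^ ga + M * (M * B * (KX * ee ^ be) + RR + Kf * ee ^ al))
                * (KX * ee ^ be)
              = KX * ee ^ be * (KA * B * ee ^ ga + M ^ 2 * B * KX * ee ^ be + M * Kf * ee ^ al)
                  * (2 * c + 1 + c * (M * (KX * ee ^ be)))
                + κ ^ n * (D * KX * W) * ee ^ (al + be) * (2 + M * (KX * ee ^ be)) := by
            rw [hRRdef]; ring
          -- smallness facts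
          have hMee : M * (KX * ee ^ be) ≤ M * (KX * h ^ be) := by
            have b1 : ee ^ be ≤ h ^ be := Real.rpow_le_rpow hee0.le heeh hbe.le
            have b2 : KX * ee ^ be ≤ KX * h ^ be := mul_le_mul_of_nonneg_left b1 hKX
            exact mul_le_mul_of_nonneg_left b2 hM
          have hcM1 : c * (M * (KX * ee ^ be)) ≤ 1 := by
            have h4 : c * (M * (KX * h ^ be)) ≤ c * (((2:ℝ) ^ (be + min al be) - 2) / 2) :=
              mul_le_mul_of_nonneg_left hsmall1 hc0.le
            have h5 : c * (((2:ℝ) ^ (be + min al be) - 2) / 2) = 1 := by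
              rw [hc]; field_simp
            have h6 : c * (M * (KX * ee ^ be)) ≤ c * (M * (KX * h ^ be)) :=
              mul_le_mul_of_nonneg_left hMee hc0.le
            linarith only [h4, h5, h6]
          have hhalfp : ((1:ℝ)/2) ^ (be + min al be) * (2 * c + 2) = c := by
            have e1 : ((1:ℝ)/2) ^ (be + min al be) = 1 / (2:ℝ) ^ (be + min al be) := by
              rw [Real.div_rpow (by norm_num) (by norm_num), Real.one_rpow]
            have hz0 : ((2:ℝ) ^ (be + min al be)) ≠ 0 := by positivity
            have hz2 : ((2:ℝ) ^ (be + min al be) - 2) ≠ 0 := ne_of_gt h2p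
            rw [e1, hc]
            field_simp
            ring
          -- key coefficient bound 1
          have key1 : KX * ee ^ be * (KA * B * ee ^ ga + M ^ 2 * B * KX * ee ^ be + M * Kf * ee ^ al)
                * (2 * c + 1 + c * (M * (KX * ee ^ be)))
              ≤ c * KX * (q' - p) ^ be *
                (KA * B * (q' - p) ^ ga + M ^ 2 * B * KX * (q' - p) ^ be + M * Kf * (q' - p) ^ al) := by
            have b1 : (1/2:ℝ) ^ ga ≤ (1/2:ℝ) ^ (min al be) :=
              Real.rpow_le_rpow_of_exponent_ge hhalfpos (by norm_num) hqga
            have b2 : (1/2:ℝ) ^ be ≤ (1/2:ℝ) ^ (min al be) :=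
              Real.rpow_le_rpow_of_exponent_ge hhalfpos (by norm_num) hqbe
            have b3 : (1/2:ℝ) ^ al ≤ (1/2:ℝ) ^ (min al be) :=
              Real.rpow_le_rpow_of_exponent_ge hhalfpos (by norm_num) hqal
            have p1 : 0 ≤ KA * B * (q' - p) ^ ga := by positivity
            have p2 : 0 ≤ M ^ 2 * B * KX * (q' - p) ^ be := by positivity
            have p3 : 0 ≤ M * Kf * (q' - p) ^ al := by positivity
            have hGee : KA * B * ee ^ ga + M ^ 2 * B * KX * ee ^ be + M * Kf * ee ^ al
                ≤ (1/2:ℝ) ^ (min al be) *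
                  (KA * B * (q' - p) ^ ga + M ^ 2 * B * KX * (q' - p) ^ be + M * Kf * (q' - p) ^ al) := by
              rw [he_ga, he_be, he_al]
              have f1 := mul_le_mul_of_nonneg_left b1 p1
              have f2 := mul_le_mul_of_nonneg_left b2 p2
              have f3 := mul_le_mul_of_nonneg_left b3 p3
              linarith only [f1, f2, f3]
            have hx1 : 0 ≤ KX * ee ^ be := mul_nonneg hKX hee_be0
            have hcoef : (2 * c + 1 + c * (M * (KX * ee ^ be))) ≤ 2 * c + 2 := by
              linarith only [hcM1]
            have hGdd0 : 0 ≤ KA * B * (q' - p) ^ ga + M ^ 2 * B * KX * (q' - p) ^ be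
                + M * Kf * (q' - p) ^ al := by linarith only [p1, p2, p3]
            calc KX * ee ^ be * (KA * B * ee ^ ga + M ^ 2 * B * KX * ee ^ be + M * Kf * ee ^ al)
                * (2 * c + 1 + c * (M * (KX * ee ^ be)))
                ≤ KX * ee ^ be * (KA * B * ee ^ ga + M ^ 2 * B * KX * ee ^ be + M * Kf * ee ^ al)
                  * (2 * c + 2) :=
                  mul_le_mul_of_nonneg_left hcoef (mul_nonneg hx1 hGee0)
              _ ≤ KX * ee ^ be * ((1/2:ℝ) ^ (min al be) *
                  (KA * B * (q' - p) ^ ga + M ^ 2 * B * KX * (q' - p) ^ be + M * Kf * (q' - p) ^ al))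
                  * (2 * c + 2) := by
                  have := mul_le_mul_of_nonneg_left hGee hx1
                  have h2c2 : (0:ℝ) ≤ 2 * c + 2 := by linarith only [hc0]
                  exact mul_le_mul_of_nonneg_right this h2c2
              _ = KX * (q' - p) ^ be *
                  (KA * B * (q' - p) ^ ga + M ^ 2 * B * KX * (q' - p) ^ be + M * Kf * (q' - p) ^ al)
                  * ((1/2:ℝ) ^ be * (1/2:ℝ) ^ (min al be) * (2 * c + 2)) := by
                  rw [he_be]; ring
              _ = c * KX * (q' - p) ^ be *
                  (KA * B * (q' - p) ^ ga + M ^ 2 * B * KX * (q' - p) ^ be + M * Kf * (q' - p) ^ al) := by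
                  rw [← Real.rpow_add hhalfpos be (min al be), hhalfp]; ring
          -- key coefficient bound 2
          have key2 : κ ^ n * (D * KX * W) * ee ^ (al + be) * (2 + M * (KX * ee ^ be))
              ≤ κ ^ (n + 1) * (D * KX * W) * (q' - p) ^ (al + be) := by
            have ha1 : (2 + M * (KX * ee ^ be)) ≤ 2 + M * (KX * h ^ be) := by
              linarith only [hMee]
            have hinner : (1/2:ℝ) ^ (al + be) * (2 + M * (KX * h ^ be)) ≤ κ := by
              have e1 : (1/2:ℝ) ^ (al + be) = 1 / (2:ℝ) ^ (al + be) := by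
                rw [Real.div_rpow (by norm_num) (by norm_num), Real.one_rpow]
              have e2 : (2:ℝ) ^ (1 - (al + be)) = 2 / (2:ℝ) ^ (al + be) := by
                rw [Real.rpow_sub (by norm_num), Real.rpow_one]
              have h2ab : (2:ℝ) ≤ (2:ℝ) ^ (al + be) := by
                have := Real.rpow_le_rpow_of_exponent_le (by norm_num : (1:ℝ) ≤ 2) halbe.le
                rwa [Real.rpow_one] at this
              have hθ : 0 ≤ M * (KX * h ^ be) := by positivity
              have e3 : (1 / (2:ℝ) ^ (al + be)) * (2 + M * (KX * h ^ be)) =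
                  2 / (2:ℝ) ^ (al + be) + (M * (KX * h ^ be)) / (2:ℝ) ^ (al + be) := by
                ring
              have e4 : (M * (KX * h ^ be)) / (2:ℝ) ^ (al + be) ≤ M * (KX * h ^ be) :=
                div_le_self hθ (by linarith only [h2ab])
              rw [hκdef, e1, e3, ← e2]
              linarith only [e4]
            have hnn1 : 0 ≤ κ ^ n * (D * KX * W) * ee ^ (al + be) :=
              mul_nonneg hEn0 hee_ab0
            calc κ ^ n * (D * KX * W) * ee ^ (al + be) * (2 + M * (KX * ee ^ be))
                ≤ κ ^ n * (D * KX * W) * ee ^ (al + be) * (2 + M * (KX * h ^ be)) :=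
                  mul_le_mul_of_nonneg_left ha1 hnn1
              _ = κ ^ n * (D * KX * W) * (q' - p) ^ (al + be) *
                  ((1/2:ℝ) ^ (al + be) * (2 + M * (KX * h ^ be))) := by
                  rw [he_ab]; ring
              _ ≤ κ ^ n * (D * KX * W) * (q' - p) ^ (al + be) * κ := by
                  have hnn2 : 0 ≤ κ ^ n * (D * KX * W) * (q' - p) ^ (al + be) :=
                    mul_nonneg hEn0 hdd_ab0
                  exact mul_le_mul_of_nonneg_left hinner hnn2
              _ = κ ^ (n + 1) * (D * KX * W) * (q' - p) ^ (al + be) := by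
                  rw [pow_succ]; ring
          -- finish
          calc ‖I p q' - A p (Y p) (X q' - X p)‖
              ≤ RR + RR + (KA * B * ee ^ ga + M * (M * B * (KX * ee ^ be) + RR + Kf * ee ^ al))
                * (KX * ee ^ be) := htot
            _ = KX * ee ^ be * (KA * B * ee ^ ga + M ^ 2 * B * KX * ee ^ be + M * Kf * ee ^ al)
                  * (2 * c + 1 + c * (M * (KX * ee ^ be)))
                + κ ^ n * (D * KX * W) * ee ^ (al + be) * (2 + M * (KX * ee ^ be)) := hexp
            _ ≤ c * KX * (q' - p) ^ be *
                  (KA * B * (q' - p) ^ ga + M ^ 2 * B * KX * (q' - p) ^ be + M * Kf * (q' - p) ^ al)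
                + κ ^ (n + 1) * (D * KX * W) * (q' - p) ^ (al + be) :=
                add_le_add key1 key2
    -- pass to the limit in n
    have hlim : Tendsto (fun n : ℕ => κ ^ n * (D * KX * W) * (u - s) ^ (al + be)) atTop (nhds 0) := by
      simpa using ((tendsto_pow_atTop_nhds_zero_of_lt_one hκ0 hκ1).mul_const
        (D * KX * W)).mul_const ((u - s) ^ (al + be))
    have hle : ∀ n : ℕ, ‖I s u - A s (Y s) (X u - X s)‖ -
        c * KX * (u - s) ^ be *
          (KA * B * (u - s) ^ ga + M ^ 2 * B * KX * (u - s) ^ be + M * Kf * (u - s) ^ al) ≤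
        κ ^ n * (D * KX * W) * (u - s) ^ (al + be) := by
      intro n
      have h7 := hmain n s u le_rfl hsu le_rfl
      linarith only [h7]
    have h7 := ge_of_tendsto hlim (Filter.Eventually.of_forall hle)
    linarith only [h7]
  · -- unbounded case: the sewing bound collapses to zero
    have hzero : hNormOn al s u (fun r => A r (Y r)) = 0 := by
      rw [hSdef] at hbdd
      exact Real.sSup_of_not_bddAbove hbdd
    have hIs := Isew s u hs hsu huT
    rw [hzero] at hIs
    simp only [mul_zero, zero_mul] at hIs
    exact le_trans hIs (Rnn (u - s) (by linarith))

set_option maxHeartbeats 2000000 in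
lemma window (T al be ga M KA KX Kf c h D : ℝ)
    (A : ℝ → V →L[ℝ] U →L[ℝ] V) (Y : ℝ → V) (X : ℝ → U) (f : ℝ → V) (I : ℝ → ℝ → V)
    (hal : 0 < al) (hbe : 0 < be) (halbe : 1 < al + be) (halga : al ≤ ga)
    (hM : 0 ≤ M) (hKA : 0 ≤ KA) (hKX : 0 ≤ KX) (hKf : 0 ≤ Kf)
    (hD : 0 ≤ D) (hh : 0 < h) (hh1 : h ≤ 1)
    (hc : c = 2 / ((2:ℝ) ^ (be + min al be) - 2))
    (hp : 1 < be + min al be)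
    (hsmall1 : M * (KX * h ^ be) ≤ ((2:ℝ) ^ (be + min al be) - 2) / 2)
    (hsmall2 : M * (KX * h ^ be) ≤ (1 - (2:ℝ) ^ (1 - (al + be))) / 2)
    (habs1 : M * (KX * h ^ be) ≤ 1/6)
    (habs2 : c * ((KA * h ^ ga) * (KX * h ^ be)) ≤ 1/6)
    (habs3 : (c * M ^ 2) * ((KX * h ^ be) * (KX * h ^ be)) ≤ 1/6)
    (habs4 : (c * M) * (KX * h ^ be) ≤ 1)
    (hAM : ∀ r, 0 ≤ r → r ≤ T → ‖A r‖ ≤ M)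
    (hAH : ∀ u v : ℝ, 0 ≤ u → u ≤ v → v ≤ T → ‖A v - A u‖ ≤ KA * (v - u) ^ ga)
    (hXH : ∀ u v : ℝ, 0 ≤ u → u ≤ v → v ≤ T → ‖X v - X u‖ ≤ KX * (v - u) ^ be)
    (hfH : ∀ u v : ℝ, 0 ≤ u → u ≤ v → v ≤ T → ‖f v - f u‖ ≤ Kf * (v - u) ^ al)
    (Iadd : ∀ s u t : ℝ, 0 ≤ s → s ≤ u → u ≤ t → t ≤ T → I s t = I s u + I u t)
    (Ieq : ∀ t : ℝ, 0 ≤ t → t ≤ T → Y t = Y 0 + I 0 t + (f t - f 0))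
    (Isew : ∀ s t : ℝ, 0 ≤ s → s ≤ t → t ≤ T →
      ‖I s t - A s (Y s) (X t - X s)‖ ≤
        D * hNormOn al s t (fun r => A r (Y r)) * KX * (t - s) ^ (al + be))
    (hGbdd : BddAbove {y : ℝ | ∃ r : ℝ, 0 ≤ r ∧ r ≤ T ∧ y = ‖Y r‖})
    (s t : ℝ) (hs : 0 ≤ s) (hst : s ≤ t) (htT : t ≤ T) (hd : t - s ≤ h) :
    ∀ u, s ≤ u → u ≤ t → ‖Y u‖ ≤ 2 * ‖Y s‖ + 4 * Kf := by
  have h2p : (0:ℝ) < (2:ℝ) ^ (be + min al be) - 2 := by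
    have h9 : (2:ℝ) ^ (1:ℝ) < (2:ℝ) ^ (be + min al be) :=
      Real.rpow_lt_rpow_of_exponent_lt (by norm_num) hp
    rw [Real.rpow_one] at h9; linarith only [h9]
  have hc0 : 0 < c := by rw [hc]; positivity
  obtain ⟨Bw, hBwdef⟩ : ∃ Bw : ℝ, Bw = sSup {y : ℝ | ∃ r : ℝ, s ≤ r ∧ r ≤ t ∧ y = ‖Y r‖} :=
    ⟨_, rfl⟩
  have hbdd : BddAbove {y : ℝ | ∃ r : ℝ, s ≤ r ∧ r ≤ t ∧ y = ‖Y r‖} := by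
    apply hGbdd.mono
    rintro y ⟨r, h1, h2, rfl⟩
    exact ⟨r, le_trans hs h1, le_trans h2 htT, rfl⟩
  have hmem : ∀ r, s ≤ r → r ≤ t → ‖Y r‖ ≤ Bw := by
    intro r h1 h2
    rw [hBwdef]
    exact le_csSup hbdd ⟨r, h1, h2, rfl⟩
  have hBw0 : 0 ≤ Bw := le_trans (norm_nonneg _) (hmem s le_rfl hst)
  -- powers of h
  have hhbe0 : 0 ≤ h ^ be := Real.rpow_nonneg hh.le _
  have hhga0 : 0 ≤ h ^ ga := Real.rpow_nonneg hh.le _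
  have hhal0 : 0 ≤ h ^ al := Real.rpow_nonneg hh.le _
  have hhal1 : h ^ al ≤ 1 := Real.rpow_le_one hh.le hh1 hal.le
  have hstep : ∀ u, s ≤ u → u ≤ t → ‖Y u‖ ≤ ‖Y s‖ + Bw / 2 + 2 * Kf := by
    intro u hsu hut
    have huT : u ≤ T := le_trans hut htT
    have hduh : u - s ≤ h := by linarith only [hd, hut]
    have hd0 : 0 ≤ u - s := by linarith only [hsu]
    have hkey := key T al be ga M KA KX Kf Bw c h D A Y X f I hal hbe halbe halga
      hM hKA hKX hKf hBw0 hD hh hc hp hsmall1 hsmall2 hAM hAH hXH hfH Iadd Ieq Isew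
      s u hs hsu huT hduh (fun r h1 h2 => hmem r h1 (le_trans h2 hut))
    -- decompose Y u
    have hy : Y u = Y s + ((I s u - A s (Y s) (X u - X s)) + A s (Y s) (X u - X s)
        + (f u - f s)) := by
      have e1 := Ieq u (le_trans hs hsu) huT
      have e2 := Ieq s hs (le_trans hst htT)
      have hadd : I 0 u = I 0 s + I s u := Iadd 0 s u le_rfl hs hsu huT
      rw [e1, e2, hadd]; abel
    have hn : ‖Y u‖ ≤ ‖Y s‖ + (‖I s u - A s (Y s) (X u - X s)‖
        + ‖A s (Y s) (X u - X s)‖ + ‖f u - f s‖) := by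
      calc ‖Y u‖ = ‖Y s + ((I s u - A s (Y s) (X u - X s)) + A s (Y s) (X u - X s)
          + (f u - f s))‖ := by rw [← hy]
        _ ≤ ‖Y s‖ + ‖(I s u - A s (Y s) (X u - X s)) + A s (Y s) (X u - X s)
          + (f u - f s)‖ := norm_add_le _ _
        _ ≤ ‖Y s‖ + (‖I s u - A s (Y s) (X u - X s)‖ + ‖A s (Y s) (X u - X s)‖
          + ‖f u - f s‖) := by
            have h7 : ‖(I s u - A s (Y s) (X u - X s)) + A s (Y s) (X u - X s)
              + (f u - f s)‖ ≤ ‖I s u - A s (Y s) (X u - X s)‖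
              + ‖A s (Y s) (X u - X s)‖ + ‖f u - f s‖ := norm_add₃_le
            linarith only [h7]
    -- monotone bounds in (u-s) ≤ h
    have m1 : (u - s) ^ be ≤ h ^ be := Real.rpow_le_rpow hd0 hduh hbe.le
    have m2 : (u - s) ^ ga ≤ h ^ ga := Real.rpow_le_rpow hd0 hduh
      (le_trans hal.le halga)
    have m3 : (u - s) ^ al ≤ h ^ al := Real.rpow_le_rpow hd0 hduh hal.le
    have c1 : ‖A s (Y s) (X u - X s)‖ ≤ M * Bw * (KX * h ^ be) := by
      have o1 : ‖A s (Y s) (X u - X s)‖ ≤ ‖A s (Y s)‖ * ‖X u - X s‖ :=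
        ContinuousLinearMap.le_opNorm _ _
      have o2 : ‖A s (Y s)‖ ≤ ‖A s‖ * ‖Y s‖ := ContinuousLinearMap.le_opNorm _ _
      have o3 : ‖X u - X s‖ ≤ KX * h ^ be := by
        have h7 := hXH s u hs hsu huT
        have h8 : KX * (u - s) ^ be ≤ KX * h ^ be := mul_le_mul_of_nonneg_left m1 hKX
        linarith only [h7, h8]
      have o4 : ‖A s‖ * ‖Y s‖ ≤ M * Bw :=
        mul_le_mul (hAM s hs (le_trans hst htT)) (hmem s le_rfl hst) (norm_nonneg _) hM
      calc ‖A s (Y s) (X u - X s)‖ ≤ ‖A s (Y s)‖ * ‖X u - X s‖ := o1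
        _ ≤ (‖A s‖ * ‖Y s‖) * ‖X u - X s‖ := mul_le_mul_of_nonneg_right o2 (norm_nonneg _)
        _ ≤ (M * Bw) * (KX * h ^ be) := mul_le_mul o4 o3 (norm_nonneg _) (by positivity)
    have c2 : ‖I s u - A s (Y s) (X u - X s)‖ ≤
        c * KX * h ^ be * (KA * Bw * h ^ ga + M ^ 2 * Bw * KX * h ^ be + M * Kf * h ^ al) := by
      refine le_trans hkey ?_
      have g1 : KA * Bw * (u - s) ^ ga ≤ KA * Bw * h ^ ga :=
        mul_le_mul_of_nonneg_left m2 (by positivity)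
      have g2 : M ^ 2 * Bw * KX * (u - s) ^ be ≤ M ^ 2 * Bw * KX * h ^ be :=
        mul_le_mul_of_nonneg_left m1 (by positivity)
      have g3 : M * Kf * (u - s) ^ al ≤ M * Kf * h ^ al :=
        mul_le_mul_of_nonneg_left m3 (by positivity)
      have hG1 : KA * Bw * (u - s) ^ ga + M ^ 2 * Bw * KX * (u - s) ^ be
          + M * Kf * (u - s) ^ al ≤ KA * Bw * h ^ ga + M ^ 2 * Bw * KX * h ^ be
          + M * Kf * h ^ al := by linarith only [g1, g2, g3]
      have hG0 : 0 ≤ KA * Bw * (u - s) ^ ga + M ^ 2 * Bw * KX * (u - s) ^ be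
          + M * Kf * (u - s) ^ al := by
        have a1 : 0 ≤ KA * Bw * (u - s) ^ ga := by
          have := Real.rpow_nonneg hd0 ga; positivity
        have a2 : 0 ≤ M ^ 2 * Bw * KX * (u - s) ^ be := by
          have := Real.rpow_nonneg hd0 be; positivity
        have a3 : 0 ≤ M * Kf * (u - s) ^ al := by
          have := Real.rpow_nonneg hd0 al; positivity
        linarith only [a1, a2, a3]
      have hbe1 : (u - s) ^ be ≤ h ^ be := m1
      calc c * KX * (u - s) ^ be * (KA * Bw * (u - s) ^ ga + M ^ 2 * Bw * KX * (u - s) ^ be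
            + M * Kf * (u - s) ^ al)
          ≤ c * KX * h ^ be * (KA * Bw * (u - s) ^ ga + M ^ 2 * Bw * KX * (u - s) ^ be
            + M * Kf * (u - s) ^ al) := by
            have h8 : c * KX * (u - s) ^ be ≤ c * KX * h ^ be :=
              mul_le_mul_of_nonneg_left hbe1 (by positivity)
            exact mul_le_mul_of_nonneg_right h8 hG0
        _ ≤ c * KX * h ^ be * (KA * Bw * h ^ ga + M ^ 2 * Bw * KX * h ^ be
            + M * Kf * h ^ al) := by
            have h9 : 0 ≤ c * KX * h ^ be := by positivity
            exact mul_le_mul_of_nonneg_left hG1 h9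
    have c3 : ‖f u - f s‖ ≤ Kf := by
      have h7 := hfH s u hs hsu huT
      have h8 : Kf * (u - s) ^ al ≤ Kf * h ^ al := mul_le_mul_of_nonneg_left m3 hKf
      have h9 : Kf * h ^ al ≤ Kf * 1 := mul_le_mul_of_nonneg_left hhal1 hKf
      rw [mul_one] at h9
      linarith only [h7, h8, h9]
    -- regroup and absorb
    have e1 : c * KX * h ^ be * (KA * Bw * h ^ ga + M ^ 2 * Bw * KX * h ^ be + M * Kf * h ^ al)
        = Bw * (c * ((KA * h ^ ga) * (KX * h ^ be)))
          + Bw * ((c * M ^ 2) * ((KX * h ^ be) * (KX * h ^ be)))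
          + (Kf * h ^ al) * ((c * M) * (KX * h ^ be)) := by ring
    have b1 : Bw * (c * ((KA * h ^ ga) * (KX * h ^ be))) ≤ Bw * (1/6) :=
      mul_le_mul_of_nonneg_left habs2 hBw0
    have b2 : Bw * ((c * M ^ 2) * ((KX * h ^ be) * (KX * h ^ be))) ≤ Bw * (1/6) :=
      mul_le_mul_of_nonneg_left habs3 hBw0
    have hKfh0 : 0 ≤ Kf * h ^ al := by positivity
    have b3 : (Kf * h ^ al) * ((c * M) * (KX * h ^ be)) ≤ (Kf * h ^ al) * 1 :=
      mul_le_mul_of_nonneg_left habs4 hKfh0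
    have b4 : Kf * h ^ al ≤ Kf := by
      have h9 : Kf * h ^ al ≤ Kf * 1 := mul_le_mul_of_nonneg_left hhal1 hKf
      rw [mul_one] at h9; exact h9
    have b5 : M * Bw * (KX * h ^ be) ≤ Bw * (1/6) := by
      have e2 : M * Bw * (KX * h ^ be) = Bw * (M * (KX * h ^ be)) := by ring
      rw [e2]
      exact mul_le_mul_of_nonneg_left habs1 hBw0
    have hc2' : ‖I s u - A s (Y s) (X u - X s)‖ ≤ Bw * (1/6) + Bw * (1/6) + Kf := by
      rw [e1] at c2
      have := b3
      rw [mul_one] at this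
      linarith only [c2, b1, b2, this, b4]
    linarith only [hn, hc2', c1, b5, c3]
  -- conclude by absorbing Bw
  have hBineq : Bw ≤ ‖Y s‖ + Bw / 2 + 2 * Kf := by
    have h7 : sSup {y : ℝ | ∃ r : ℝ, s ≤ r ∧ r ≤ t ∧ y = ‖Y r‖} ≤ ‖Y s‖ + Bw / 2 + 2 * Kf := by
      apply Real.sSup_le
      · rintro y ⟨r, h1, h2, rfl⟩
        exact hstep r h1 h2
      · have := norm_nonneg (Y s)
        linarith only [this, hBw0, hKf]
    rw [← hBwdef] at h7
    exact h7
  intro u h1 h2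
  have h8 := hmem u h1 h2
  linarith only [h8, hBineq]

end key

set_option maxHeartbeats 2000000 in
theorem stmt5 {U V : Type*} [NormedAddCommGroup U] [NormedSpace ℝ U]
    [NormedAddCommGroup V] [NormedSpace ℝ V]
    (T al be ga M : ℝ) (hT : 0 < T) (hbe : be ∈ Set.Ioc (1 / 2 : ℝ) 1)
    (hal : 0 < al) (halga : al ≤ ga) (hga : ga < 1) (halbe : 1 < al + be) :
    ∃ C₁ C₂ : ℝ, 0 < C₁ ∧ 0 < C₂ ∧
      ∀ (f : ℝ → V) (X : ℝ → U) (A : ℝ → V →L[ℝ] U →L[ℝ] V) (Y : ℝ → V),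
        HolderOn al T f → HolderOn be T X → HolderOn ga T A →
        sNorm T A ≤ M →
        SolvesCYE al be T A Y X f →
        sNorm T Y ≤
          C₁ * Real.exp (C₂ * (hNorm ga T A ^ (1 / ga) + hNorm be T X ^ (1 / be))) *
            (‖Y 0‖ + hNorm al T f) := by
  obtain ⟨hbe12, hbe1⟩ := hbe
  have hbe0 : (0:ℝ) < be := by linarith
  have hga0 : (0:ℝ) < ga := lt_of_lt_of_le hal halga
  have hp : 1 < be + min al be := by
    rcases le_total al be with h' | h'
    · rw [min_eq_left h']; linarith
    · rw [min_eq_right h']; linarith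
  have h2p : (0:ℝ) < (2:ℝ) ^ (be + min al be) - 2 := by
    have h9 : (2:ℝ) ^ (1:ℝ) < (2:ℝ) ^ (be + min al be) :=
      Real.rpow_lt_rpow_of_exponent_lt (by norm_num) hp
    rw [Real.rpow_one] at h9; linarith only [h9]
  obtain ⟨c, hc⟩ : ∃ c : ℝ, c = 2 / ((2:ℝ) ^ (be + min al be) - 2) := ⟨_, rfl⟩
  have hc0 : 0 < c := by rw [hc]; positivity
  have ht0 : (0:ℝ) < (2:ℝ) ^ (1 - (al + be)) := Real.rpow_pos_of_pos (by norm_num) _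
  have ht1 : (2:ℝ) ^ (1 - (al + be)) < 1 :=
    Real.rpow_lt_one_of_one_lt_of_neg (by norm_num) (by linarith)
  obtain ⟨ε₁, hε₁def⟩ : ∃ e : ℝ, e = min (1/6 : ℝ)
      (min (((2:ℝ) ^ (be + min al be) - 2) / 2) ((1 - (2:ℝ) ^ (1 - (al + be))) / 2)) := ⟨_, rfl⟩
  have hε₁0 : 0 < ε₁ := by
    rw [hε₁def]
    apply lt_min (by norm_num)
    apply lt_min
    · linarith only [h2p]
    · linarith only [ht1]
  have hε₁a : ε₁ ≤ 1/6 := by rw [hε₁def]; exact min_le_left _ _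
  have hε₁b : ε₁ ≤ ((2:ℝ) ^ (be + min al be) - 2) / 2 := by
    rw [hε₁def]; exact le_trans (min_le_right _ _) (min_le_left _ _)
  have hε₁c : ε₁ ≤ (1 - (2:ℝ) ^ (1 - (al + be))) / 2 := by
    rw [hε₁def]; exact le_trans (min_le_right _ _) (min_le_right _ _)
  obtain ⟨M₁, hM₁def⟩ : ∃ m : ℝ, m = max M 1 := ⟨_, rfl⟩
  have hM₁1 : 1 ≤ M₁ := hM₁def ▸ le_max_right _ _
  have hMM₁ : M ≤ M₁ := hM₁def ▸ le_max_left _ _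
  have hM₁0 : 0 < M₁ := lt_of_lt_of_le one_pos hM₁1
  obtain ⟨E, hEdef⟩ : ∃ E : ℝ, E = M₁ + c + c * M₁ + c * M₁ ^ 2 + 1 := ⟨_, rfl⟩
  have hcM₁0 : 0 ≤ c * M₁ := mul_nonneg hc0.le hM₁0.le
  have hcM₁20 : 0 ≤ c * M₁ ^ 2 := mul_nonneg hc0.le (sq_nonneg M₁)
  have hE1 : 1 ≤ E := by rw [hEdef]; linarith only [hM₁0, hc0, hcM₁0, hcM₁20]
  have hE0 : 0 < E := lt_of_lt_of_le one_pos hE1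
  have hEM : M₁ ≤ E := by rw [hEdef]; linarith only [hc0, hcM₁0, hcM₁20]
  have hEc : c ≤ E := by rw [hEdef]; linarith only [hM₁0, hcM₁0, hcM₁20]
  have hEcM : c * M₁ ≤ E := by rw [hEdef]; linarith only [hM₁0, hc0, hcM₁20]
  have hEcM2 : c * M₁ ^ 2 ≤ E := by rw [hEdef]; linarith only [hM₁0, hc0, hcM₁0]
  obtain ⟨h₀, hh₀def⟩ : ∃ x : ℝ, x = (ε₁ / E) ^ (be⁻¹) := ⟨_, rfl⟩
  have hεE0 : 0 ≤ ε₁ / E := by positivity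
  have hεE1 : ε₁ / E ≤ 1 := by rw [div_le_one hE0]; linarith only [hε₁a, hE1]
  have hh₀0 : 0 < h₀ := hh₀def ▸ Real.rpow_pos_of_pos (by positivity) _
  have hh₀1 : h₀ ≤ 1 := hh₀def ▸ Real.rpow_le_one hεE0 hεE1 (by positivity)
  have hh₀be : h₀ ^ be = ε₁ / E := by
    rw [hh₀def]; exact Real.rpow_inv_rpow hεE0 (ne_of_gt hbe0)
  have hlog2 : 0 < Real.log 2 := Real.log_pos (by norm_num)
  obtain ⟨C₂, hC₂def⟩ : ∃ x : ℝ, x = T * Real.log 2 / h₀ := ⟨_, rfl⟩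
  have hC₂0 : 0 < C₂ := hC₂def ▸ div_pos (mul_pos hT hlog2) hh₀0
  refine ⟨8 * Real.exp C₂, C₂, by positivity, hC₂0, ?_⟩
  intro f X A Y hf hX hA hAMs hsol
  obtain ⟨I, Iadd, Ieq, Isew0⟩ := hsol
  have hTT : (0:ℝ) ≤ T := hT.le
  -- operator norm bound on A
  obtain ⟨KAc, hKAc⟩ := hA
  have hKAc0 : 0 ≤ KAc := by
    by_contra hneg
    push_neg at hneg
    have h1 := hKAc 0 T le_rfl hTT le_rfl
    rw [sub_zero] at h1
    have h2 : 0 < T ^ ga := Real.rpow_pos_of_pos hT _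
    have h3 : KAc * T ^ ga < 0 := mul_neg_of_neg_of_pos hneg h2
    linarith only [h1, h3, norm_nonneg (A T - A 0)]
  have hAbdd : BddAbove {y : ℝ | ∃ u : ℝ, 0 ≤ u ∧ u ≤ T ∧ y = ‖A u‖} := by
    refine ⟨‖A 0‖ + KAc * T ^ ga, ?_⟩
    rintro y ⟨r, hr0, hrT, rfl⟩
    have h1 : ‖A r - A 0‖ ≤ KAc * (r - 0) ^ ga := hKAc 0 r le_rfl hr0 hrT
    rw [sub_zero] at h1
    have h2 : r ^ ga ≤ T ^ ga := Real.rpow_le_rpow hr0 hrT hga0.le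
    have h3 : ‖A r‖ ≤ ‖A 0‖ + ‖A r - A 0‖ := by
      have h9 := norm_add_le (A 0) (A r - A 0)
      simpa using h9
    have h4 : KAc * r ^ ga ≤ KAc * T ^ ga := mul_le_mul_of_nonneg_left h2 hKAc0
    linarith only [h1, h3, h4]
  have hAM : ∀ r, 0 ≤ r → r ≤ T → ‖A r‖ ≤ M := by
    intro r h1 h2
    have h3 : ‖A r‖ ≤ sNorm T A := le_csSup hAbdd ⟨r, h1, h2, rfl⟩
    linarith only [h3, hAMs]
  have hM0 : 0 ≤ M := le_trans (norm_nonneg (A 0)) (hAM 0 le_rfl hTT)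
  -- seminorms
  have hKf0 : 0 ≤ hNorm al T f := hNorm_nonneg _ _ _
  have hKX0 : 0 ≤ hNorm be T X := hNorm_nonneg _ _ _
  have hKA0 : 0 ≤ hNorm ga T A := hNorm_nonneg _ _ _
  have hfI : ∀ u v : ℝ, 0 ≤ u → u ≤ v → v ≤ T →
      ‖f v - f u‖ ≤ hNorm al T f * (v - u) ^ al :=
    fun u v h1 h2 h3 => norm_sub_le_hNorm hal hf h1 h2 h3
  have hXI : ∀ u v : ℝ, 0 ≤ u → u ≤ v → v ≤ T →
      ‖X v - X u‖ ≤ hNorm be T X * (v - u) ^ be :=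
    fun u v h1 h2 h3 => norm_sub_le_hNorm hbe0 hX h1 h2 h3
  have hAI : ∀ u v : ℝ, 0 ≤ u → u ≤ v → v ≤ T →
      ‖A v - A u‖ ≤ hNorm ga T A * (v - u) ^ ga :=
    fun u v h1 h2 h3 => norm_sub_le_hNorm hga0 ⟨KAc, hKAc⟩ h1 h2 h3
  -- sewing constant
  obtain ⟨D, hDdef⟩ : ∃ D : ℝ,
      D = (2:ℝ) ^ (al + be) * (∑' n : ℕ, ((n:ℝ) + 1) ^ (-(al + be))) := ⟨_, rfl⟩
  have hD0 : 0 ≤ D := by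
    rw [hDdef]
    have h1 : 0 ≤ ∑' n : ℕ, ((n:ℝ) + 1) ^ (-(al + be)) :=
      tsum_nonneg fun n => Real.rpow_nonneg (by positivity) _
    exact mul_nonneg (Real.rpow_nonneg (by norm_num) _) h1
  have Isew : ∀ s t : ℝ, 0 ≤ s → s ≤ t → t ≤ T →
      ‖I s t - A s (Y s) (X t - X s)‖ ≤
        D * hNormOn al s t (fun r => A r (Y r)) * hNorm be T X * (t - s) ^ (al + be) := by
    intro s t h1 h2 h3
    rw [hDdef]
    exact Isew0 s t h1 h2 h3
  -- scale G and step size h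
  obtain ⟨G, hGdef⟩ : ∃ G : ℝ, G = hNorm ga T A ^ (1/ga) + hNorm be T X ^ (1/be) := ⟨_, rfl⟩
  have hGA0 : 0 ≤ hNorm ga T A ^ (1/ga) := Real.rpow_nonneg hKA0 _
  have hGX0 : 0 ≤ hNorm be T X ^ (1/be) := Real.rpow_nonneg hKX0 _
  have hG0 : 0 ≤ G := by rw [hGdef]; linarith only [hGA0, hGX0]
  have h1G : 0 < 1 + G := by linarith only [hG0]
  obtain ⟨h, hhdef⟩ : ∃ x : ℝ, x = h₀ / (1 + G) := ⟨_, rfl⟩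
  have hh : 0 < h := hhdef ▸ div_pos hh₀0 h1G
  have hh1 : h ≤ 1 := by
    rw [hhdef, div_le_one h1G]; linarith only [hh₀1, hG0]
  -- smallness
  have hhbe : h ^ be = h₀ ^ be / (1 + G) ^ be := by
    rw [hhdef]; exact Real.div_rpow hh₀0.le h1G.le be
  have hhga : h ^ ga = h₀ ^ ga / (1 + G) ^ ga := by
    rw [hhdef]; exact Real.div_rpow hh₀0.le h1G.le ga
  have h1Gbe : 0 < (1 + G) ^ be := Real.rpow_pos_of_pos h1G _
  have h1Gga : 0 < (1 + G) ^ ga := Real.rpow_pos_of_pos h1G _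
  have hKXle : hNorm be T X ≤ (1 + G) ^ be := by
    have base : hNorm be T X ^ (1/be) ≤ 1 + G := by
      rw [hGdef]; linarith only [hGA0]
    have e9 : (hNorm be T X ^ (1/be)) ^ be = hNorm be T X := by
      rw [one_div]; exact Real.rpow_inv_rpow hKX0 (ne_of_gt hbe0)
    calc hNorm be T X = (hNorm be T X ^ (1/be)) ^ be := e9.symm
      _ ≤ (1 + G) ^ be := Real.rpow_le_rpow hGX0 base hbe0.le
  have hKAle : hNorm ga T A ≤ (1 + G) ^ ga := by
    have base : hNorm ga T A ^ (1/ga) ≤ 1 + G := by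
      rw [hGdef]; linarith only [hGX0]
    have e9 : (hNorm ga T A ^ (1/ga)) ^ ga = hNorm ga T A := by
      rw [one_div]; exact Real.rpow_inv_rpow hKA0 (ne_of_gt hga0)
    calc hNorm ga T A = (hNorm ga T A ^ (1/ga)) ^ ga := e9.symm
      _ ≤ (1 + G) ^ ga := Real.rpow_le_rpow hGA0 base hga0.le
  have hKXh : hNorm be T X * h ^ be ≤ ε₁ / E := by
    have e1 : hNorm be T X * h ^ be = (hNorm be T X / (1 + G) ^ be) * h₀ ^ be := by
      rw [hhbe]; ring
    have h2 : hNorm be T X / (1 + G) ^ be ≤ 1 := (div_le_one h1Gbe).2 hKXle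
    calc hNorm be T X * h ^ be = (hNorm be T X / (1 + G) ^ be) * h₀ ^ be := e1
      _ ≤ 1 * h₀ ^ be := mul_le_mul_of_nonneg_right h2 (Real.rpow_nonneg hh₀0.le _)
      _ = ε₁ / E := by rw [one_mul, hh₀be]
  have hKAh : hNorm ga T A * h ^ ga ≤ 1 := by
    have e1 : hNorm ga T A * h ^ ga = (hNorm ga T A / (1 + G) ^ ga) * h₀ ^ ga := by
      rw [hhga]; ring
    have h2 : hNorm ga T A / (1 + G) ^ ga ≤ 1 := (div_le_one h1Gga).2 hKAle
    have h3 : h₀ ^ ga ≤ 1 := Real.rpow_le_one hh₀0.le hh₀1 hga0.le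
    calc hNorm ga T A * h ^ ga = (hNorm ga T A / (1 + G) ^ ga) * h₀ ^ ga := e1
      _ ≤ 1 * h₀ ^ ga := mul_le_mul_of_nonneg_right h2 (Real.rpow_nonneg hh₀0.le _)
      _ ≤ 1 := by rw [one_mul]; exact h3
  have hgen : ∀ z : ℝ, 0 ≤ z → z ≤ E → z * (ε₁ / E) ≤ ε₁ := by
    intro z hz0 hzE
    have h1 : z * (ε₁ / E) ≤ E * (ε₁ / E) := mul_le_mul_of_nonneg_right hzE (by positivity)
    have h2 : E * (ε₁ / E) = ε₁ := by field_simp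
    linarith only [h1, h2]
  have hKXhnn : 0 ≤ hNorm be T X * h ^ be :=
    mul_nonneg hKX0 (Real.rpow_nonneg hh.le _)
  have hMKX : M * (hNorm be T X * h ^ be) ≤ ε₁ := by
    have h1 : M * (hNorm be T X * h ^ be) ≤ M₁ * (ε₁ / E) :=
      mul_le_mul hMM₁ hKXh hKXhnn hM₁0.le
    have h2 := hgen M₁ hM₁0.le hEM
    linarith only [h1, h2]
  have hsmall1 : M * (hNorm be T X * h ^ be) ≤ ((2:ℝ) ^ (be + min al be) - 2) / 2 := by
    linarith only [hMKX, hε₁b]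
  have hsmall2 : M * (hNorm be T X * h ^ be) ≤ (1 - (2:ℝ) ^ (1 - (al + be))) / 2 := by
    linarith only [hMKX, hε₁c]
  have habs1 : M * (hNorm be T X * h ^ be) ≤ 1/6 := by linarith only [hMKX, hε₁a]
  have habs2 : c * ((hNorm ga T A * h ^ ga) * (hNorm be T X * h ^ be)) ≤ 1/6 := by
    have h1 : (hNorm ga T A * h ^ ga) * (hNorm be T X * h ^ be) ≤ 1 * (ε₁ / E) :=
      mul_le_mul hKAh hKXh hKXhnn (by norm_num)
    rw [one_mul] at h1
    have h2 : c * ((hNorm ga T A * h ^ ga) * (hNorm be T X * h ^ be)) ≤ c * (ε₁ / E) :=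
      mul_le_mul_of_nonneg_left h1 hc0.le
    have h3 := hgen c hc0.le hEc
    linarith only [h2, h3, hε₁a]
  have habs3 : (c * M ^ 2) * ((hNorm be T X * h ^ be) * (hNorm be T X * h ^ be)) ≤ 1/6 := by
    have hKXh1 : hNorm be T X * h ^ be ≤ 1 := le_trans hKXh hεE1
    have h1 : (hNorm be T X * h ^ be) * (hNorm be T X * h ^ be) ≤ (ε₁ / E) * 1 :=
      mul_le_mul hKXh hKXh1 hKXhnn hεE0
    rw [mul_one] at h1
    have hM2 : M ^ 2 ≤ M₁ ^ 2 := pow_le_pow_left₀ hM0 hMM₁ 2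
    have hcM2 : c * M ^ 2 ≤ E := by
      have h9 : c * M ^ 2 ≤ c * M₁ ^ 2 := mul_le_mul_of_nonneg_left hM2 hc0.le
      linarith only [h9, hEcM2]
    have hcM20 : 0 ≤ c * M ^ 2 := mul_nonneg hc0.le (sq_nonneg M)
    have h2 : (c * M ^ 2) * ((hNorm be T X * h ^ be) * (hNorm be T X * h ^ be)) ≤
        (c * M ^ 2) * (ε₁ / E) := mul_le_mul_of_nonneg_left h1 hcM20
    have h3 := hgen (c * M ^ 2) hcM20 hcM2
    linarith only [h2, h3, hε₁a]
  have habs4 : (c * M) * (hNorm be T X * h ^ be) ≤ 1 := by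
    have hcM : c * M ≤ E := by
      have h9 : c * M ≤ c * M₁ := mul_le_mul_of_nonneg_left hMM₁ hc0.le
      linarith only [h9, hEcM]
    have hcM0 : 0 ≤ c * M := mul_nonneg hc0.le hM0
    have h2 : (c * M) * (hNorm be T X * h ^ be) ≤ (c * M) * (ε₁ / E) :=
      mul_le_mul_of_nonneg_left hKXh hcM0
    have h3 := hgen (c * M) hcM0 hcM
    linarith only [h2, h3, hε₁a]
  -- right-hand side nonnegativity
  have hRHS0 : 0 ≤ 8 * Real.exp C₂ *
      Real.exp (C₂ * (hNorm ga T A ^ (1 / ga) + hNorm be T X ^ (1 / be))) *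
      (‖Y 0‖ + hNorm al T f) := by
    have h1 : 0 ≤ ‖Y 0‖ + hNorm al T f := add_nonneg (norm_nonneg _) hKf0
    positivity
  have hsN : sNorm T Y = sSup {y : ℝ | ∃ r : ℝ, 0 ≤ r ∧ r ≤ T ∧ y = ‖Y r‖} := rfl
  by_cases hGb : BddAbove {y : ℝ | ∃ r : ℝ, 0 ≤ r ∧ r ≤ T ∧ y = ‖Y r‖}
  · -- bounded case
    rw [hsN]
    apply Real.sSup_le _ hRHS0
    rintro y ⟨r, hr0, hrT, rfl⟩
    have hwin : ∀ s t : ℝ, 0 ≤ s → s ≤ t → t ≤ T → t - s ≤ h →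
        ∀ u, s ≤ u → u ≤ t → ‖Y u‖ ≤ 2 * ‖Y s‖ + 4 * hNorm al T f :=
      fun s t h1 h2 h3 h4 =>
        window T al be ga M (hNorm ga T A) (hNorm be T X) (hNorm al T f) c h D A Y X f I
          hal hbe0 halbe halga hM0 hKA0 hKX0 hKf0 hD0 hh hh1 hc hp hsmall1 hsmall2
          habs1 habs2 habs3 habs4 hAM hAI hXI hfI Iadd Ieq Isew hGb s t h1 h2 h3 h4
    have grid : ∀ k : ℕ, ‖Y (min T ((k:ℝ) * h))‖ + 4 * hNorm al T f ≤
        2 ^ k * (‖Y 0‖ + 4 * hNorm al T f) := by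
      intro k
      induction k with
      | zero => simp [min_eq_right hT.le]
      | succ k ihk =>
        have hsk0 : 0 ≤ min T ((k:ℝ) * h) := le_min hT.le (by positivity)
        have hmul : (k:ℝ) * h ≤ ((k:ℝ) + 1) * h :=
          mul_le_mul_of_nonneg_right (by linarith only [] : (k:ℝ) ≤ (k:ℝ) + 1) hh.le
        have hsk1 : min T ((k:ℝ) * h) ≤ min T (((k:ℝ) + 1) * h) := min_le_min le_rfl hmul
        have hskT : min T (((k:ℝ) + 1) * h) ≤ T := min_le_left _ _
        have hdless : min T (((k:ℝ) + 1) * h) - min T ((k:ℝ) * h) ≤ h := by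
          rcases le_total ((k:ℝ) * h) T with hA | hA
          · rw [min_eq_right hA]
            rcases le_total (((k:ℝ) + 1) * h) T with hB | hB
            · rw [min_eq_right hB]; linarith
            · rw [min_eq_left hB]; linarith
          · rw [min_eq_left hA]
            have h9 : min T (((k:ℝ) + 1) * h) ≤ T := min_le_left _ _
            linarith only [h9, hh.le]
        have hw := hwin _ _ hsk0 hsk1 hskT hdless _ hsk1 le_rfl
        have hcast : ((k + 1 : ℕ) : ℝ) = (k:ℝ) + 1 := by push_cast; ring
        rw [hcast, pow_succ]
        linarith only [hw, ihk, hKf0]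
    obtain ⟨k, hkdef⟩ : ∃ k : ℕ, k = ⌊r / h⌋₊ := ⟨_, rfl⟩
    have hk1 : (k:ℝ) ≤ r / h := by rw [hkdef]; exact Nat.floor_le (div_nonneg hr0 hh.le)
    have hk2 : r / h < (k:ℝ) + 1 := by rw [hkdef]; exact Nat.lt_floor_add_one _
    have hkh : (k:ℝ) * h ≤ r := (le_div_iff₀ hh).1 hk1
    have hrk1 : r ≤ ((k:ℝ) + 1) * h := le_of_lt ((div_lt_iff₀ hh).1 hk2)
    have hs0 : 0 ≤ (k:ℝ) * h := by positivity
    have hst : (k:ℝ) * h ≤ min T (((k:ℝ) + 1) * h) :=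
      le_min (le_trans hkh hrT)
        (mul_le_mul_of_nonneg_right (by linarith only [] : (k:ℝ) ≤ (k:ℝ) + 1) hh.le)
    have htT' : min T (((k:ℝ) + 1) * h) ≤ T := min_le_left _ _
    have hd' : min T (((k:ℝ) + 1) * h) - (k:ℝ) * h ≤ h := by
      have h9 := min_le_right T (((k:ℝ) + 1) * h)
      linarith only [h9]
    have hru : r ≤ min T (((k:ℝ) + 1) * h) := le_min hrT hrk1
    have hw := hwin _ _ hs0 hst htT' hd' r hkh hru
    have hg := grid k
    rw [min_eq_right (le_trans hkh hrT)] at hg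
    have hYr : ‖Y r‖ ≤ 2 ^ (k + 1) * (‖Y 0‖ + 4 * hNorm al T f) := by
      rw [pow_succ]
      linarith only [hw, hg, hKf0]
    have hkTh : (k:ℝ) ≤ T / h := by
      have h9 : r * h⁻¹ ≤ T * h⁻¹ :=
        mul_le_mul_of_nonneg_right hrT (inv_nonneg.2 hh.le)
      rw [div_eq_mul_inv]
      rw [div_eq_mul_inv] at hk1
      linarith only [h9, hk1]
    have hpow : (2:ℝ) ^ (k + 1) ≤ 2 * (Real.exp C₂ * Real.exp (C₂ * G)) := by
      have e1 : (2:ℝ) ^ (k + 1) = Real.exp (((k + 1 : ℕ):ℝ) * Real.log 2) := by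
        rw [Real.exp_nat_mul, Real.exp_log (by norm_num : (0:ℝ) < 2)]
      have e2 : ((k + 1 : ℕ):ℝ) * Real.log 2 ≤ (T / h + 1) * Real.log 2 := by
        have h9 : ((k + 1 : ℕ):ℝ) ≤ T / h + 1 := by push_cast; linarith only [hkTh]
        exact mul_le_mul_of_nonneg_right h9 hlog2.le
      have e3 : (T / h + 1) * Real.log 2 = C₂ + C₂ * G + Real.log 2 := by
        rw [hC₂def, hhdef]
        field_simp
      have e4 : Real.exp (C₂ + C₂ * G + Real.log 2) =
          Real.exp C₂ * Real.exp (C₂ * G) * 2 := by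
        rw [Real.exp_add, Real.exp_add, Real.exp_log (by norm_num : (0:ℝ) < 2)]
      calc (2:ℝ) ^ (k + 1) = Real.exp (((k + 1 : ℕ):ℝ) * Real.log 2) := e1
        _ ≤ Real.exp ((T / h + 1) * Real.log 2) := Real.exp_le_exp.2 e2
        _ = 2 * (Real.exp C₂ * Real.exp (C₂ * G)) := by rw [e3, e4]; ring
    have hpownn : (0:ℝ) ≤ 2 ^ (k + 1) := by positivity
    have hB04 : ‖Y 0‖ + 4 * hNorm al T f ≤ 4 * (‖Y 0‖ + hNorm al T f) := by
      linarith only [norm_nonneg (Y 0), hKf0]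
    have h5 : ‖Y r‖ ≤ (2:ℝ) ^ (k + 1) * (4 * (‖Y 0‖ + hNorm al T f)) := by
      have h9 : (2:ℝ) ^ (k + 1) * (‖Y 0‖ + 4 * hNorm al T f) ≤
          (2:ℝ) ^ (k + 1) * (4 * (‖Y 0‖ + hNorm al T f)) :=
        mul_le_mul_of_nonneg_left hB04 hpownn
      linarith only [hYr, h9]
    have hfac0 : (0:ℝ) ≤ 4 * (‖Y 0‖ + hNorm al T f) := by
      have h9 := norm_nonneg (Y 0)
      linarith only [h9, hKf0]
    have h6 : (2:ℝ) ^ (k + 1) * (4 * (‖Y 0‖ + hNorm al T f)) ≤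
        (2 * (Real.exp C₂ * Real.exp (C₂ * G))) * (4 * (‖Y 0‖ + hNorm al T f)) :=
      mul_le_mul_of_nonneg_right hpow hfac0
    have e7 : (2 * (Real.exp C₂ * Real.exp (C₂ * G))) * (4 * (‖Y 0‖ + hNorm al T f)) =
        8 * Real.exp C₂ * Real.exp (C₂ * G) * (‖Y 0‖ + hNorm al T f) := by ring
    rw [← hGdef]
    linarith only [h5, h6, e7]
  · -- unbounded: junk value 0
    rw [hsN, Real.sSup_of_not_bddAbove hGb]
    exact hRHS0
end
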